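/- arXiv:2410.08423 — 2 statements merged into one kernel-verified Lean document; each statement's English description precedes it below -/
import Mathlib

section
/- Suppose c < c_⋆, where c_⋆ = -1 - x_⋆ - e^{x_⋆} and x_⋆ is the unique positive solution of x e^x/(1+e^x) = 1. Then there exists a constant ψ_c > 0 (depending only on c) such that for every positive integer n, τ(1/4, K_{c,n}) ≥ exp(ψ_c n)/8. -/
open Real MeasureTheory

noncomputable def sigmoid (x : ℝ) : ℝ := Real.exp x / (1 + Real.exp x)

noncomputable def mc (c x : ℝ) : ℝ := _root_.sigmoid (c * x)

noncomputable def Ker (c : ℝ) (n : ℕ) (i j : Fin (n + 1)) : ℝ :=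
  (n.choose (j : ℕ)) * _root_.sigmoid (c * (i : ℕ) / n) ^ (j : ℕ) *
    (1 - _root_.sigmoid (c * (i : ℕ) / n)) ^ (n - (j : ℕ))

noncomputable def KerPow (c : ℝ) (n : ℕ) : ℕ → Fin (n + 1) → Fin (n + 1) → ℝ
  | 0 => fun i j => if i = j then 1 else 0
  | t + 1 => fun i j => ∑ k, KerPow c n t i k * Ker c n k j

noncomputable def piWeight (c : ℝ) (n : ℕ) (j : Fin (n + 1)) : ℝ :=
  (n.choose (j : ℕ)) * (1 + Real.exp (c * (j : ℕ) / n)) ^ n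

noncomputable def piDist (c : ℝ) (n : ℕ) (j : Fin (n + 1)) : ℝ :=
  piWeight c n j / ∑ k, piWeight c n k

noncomputable def tvDist {m : ℕ} (p q : Fin m → ℝ) : ℝ :=
  ⨆ A : Finset (Fin m), |∑ i ∈ A, p i - ∑ i ∈ A, q i|

noncomputable def mixTime (c : ℝ) (n : ℕ) (ε : ℝ) : ℕ :=
  Finset.univ.sup fun x : Fin (n + 1) =>
    sInf {t : ℕ | tvDist (KerPow c n t x) (piDist c n) < ε}


section Aux
open Finset Filter Topology

lemma one_add_exp_pos (x : ℝ) : 0 < 1 + Real.exp x := by positivity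

lemma sigmoid_pos (x : ℝ) : 0 < _root_.sigmoid x := by
  unfold _root_.sigmoid; positivity

lemma sigmoid_lt_one (x : ℝ) : _root_.sigmoid x < 1 := by
  unfold _root_.sigmoid
  rw [div_lt_one (one_add_exp_pos x)]
  linarith

lemma one_sub_sigmoid (x : ℝ) : 1 - _root_.sigmoid x = 1 / (1 + Real.exp x) := by
  unfold _root_.sigmoid
  field_simp
  ring

lemma sigmoid_strictMono : StrictMono _root_.sigmoid := by
  intro x y hxy
  unfold _root_.sigmoid
  rw [div_lt_div_iff₀ (one_add_exp_pos x) (one_add_exp_pos y)]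
  have := Real.exp_lt_exp.mpr hxy
  nlinarith [Real.exp_pos x, Real.exp_pos y]

lemma hasDerivAt_sigmoid (x : ℝ) :
    HasDerivAt _root_.sigmoid (_root_.sigmoid x * (1 - _root_.sigmoid x)) x := by
  have h1 : HasDerivAt (fun x : ℝ => 1 + Real.exp x) (Real.exp x) x :=
    (Real.hasDerivAt_exp x).const_add 1
  have h2 := (Real.hasDerivAt_exp x).div h1 (ne_of_gt (one_add_exp_pos x))
  convert h2 using 1
  · rfl
  · rfl
  · rfl
  rw [one_sub_sigmoid]
  unfold _root_.sigmoid
  field_simp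
  ring

lemma sigmoid_continuous : Continuous _root_.sigmoid := by
  apply Real.continuous_exp.div (by continuity)
  intro x; exact ne_of_gt (one_add_exp_pos x)

lemma exp_le_quad {l : ℝ} (hl0 : 0 ≤ l) (hl : l ≤ 1/2) : Real.exp l ≤ 1 + l + 2*l^2 := by
  have h1 : 1 - l ≤ Real.exp (-l) := by
    have := Real.add_one_le_exp (-l); linarith
  have h2 : 0 < 1 - l := by linarith
  have h3 : Real.exp l ≤ 1 / (1 - l) := by
    rw [le_div_iff₀ h2]
    calc Real.exp l * (1 - l) ≤ Real.exp l * Real.exp (-l) := by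
          apply mul_le_mul_of_nonneg_left h1 (Real.exp_nonneg l)
      _ = 1 := by rw [← Real.exp_add]; simp
  have h4 : 1 / (1 - l) ≤ 1 + l + 2*l^2 := by
    rw [div_le_iff₀ h2]; nlinarith
  linarith

lemma binom_upper_tail (n : ℕ) (p m : ℝ) (hp0 : 0 ≤ p) (hp1 : p ≤ 1)
    (hm0 : 0 < m) (hm1 : m ≤ 1) (T : Finset ℕ) (hTn : ∀ j ∈ T, j ≤ n)
    (hT : ∀ j ∈ T, (n:ℝ) * (p + m) ≤ j) :
    ∑ j ∈ T, (n.choose j : ℝ) * p^j * (1-p)^(n-j) ≤ Real.exp (-(n:ℝ) * m^2 / 8) := by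
  set l : ℝ := m/4 with hl
  have hl0 : 0 ≤ l := by positivity
  have hl2 : l ≤ 1/2 := by rw [hl]; linarith
  have hq0 : 0 ≤ 1 - p := by linarith
  have key : ∀ j ∈ T, (n.choose j : ℝ) * p^j * (1-p)^(n-j) ≤
      ((n.choose j : ℝ) * (p * Real.exp l)^j * (1-p)^(n-j)) * Real.exp (-(l * ((n:ℝ)*(p+m)))) := by
    intro j hj
    have h1 : (n.choose j : ℝ) * p^j * (1-p)^(n-j) ≤
        (n.choose j : ℝ) * p^j * (1-p)^(n-j) * Real.exp (l * j - l * ((n:ℝ)*(p+m))) := by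
      nth_rewrite 1 [← mul_one ((n.choose j : ℝ) * p^j * (1-p)^(n-j))]
      apply mul_le_mul_of_nonneg_left _ (by positivity)
      rw [← Real.exp_zero]
      apply Real.exp_le_exp.mpr
      have := hT j hj
      nlinarith
    calc (n.choose j : ℝ) * p^j * (1-p)^(n-j)
        ≤ (n.choose j : ℝ) * p^j * (1-p)^(n-j) * Real.exp (l * j - l * ((n:ℝ)*(p+m))) := h1
      _ = ((n.choose j : ℝ) * (p * Real.exp l)^j * (1-p)^(n-j)) * Real.exp (-(l * ((n:ℝ)*(p+m)))) := by
          rw [Real.exp_sub, mul_pow]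
          rw [show Real.exp (l * (j:ℝ)) = Real.exp l ^ j by
            rw [← Real.exp_nat_mul]; ring_nf]
          rw [Real.exp_neg]
          field_simp
  have hsub : T ⊆ Finset.range (n+1) := fun j hj =>
    Finset.mem_range.mpr (Nat.lt_succ_of_le (hTn j hj))
  have step1 : ∑ j ∈ T, (n.choose j : ℝ) * p^j * (1-p)^(n-j) ≤
      ∑ j ∈ Finset.range (n+1), ((n.choose j : ℝ) * (p * Real.exp l)^j * (1-p)^(n-j)) * Real.exp (-(l * ((n:ℝ)*(p+m)))) := by
    calc ∑ j ∈ T, (n.choose j : ℝ) * p^j * (1-p)^(n-j)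
        ≤ ∑ j ∈ T, ((n.choose j : ℝ) * (p * Real.exp l)^j * (1-p)^(n-j)) * Real.exp (-(l * ((n:ℝ)*(p+m)))) :=
          Finset.sum_le_sum key
      _ ≤ _ := by
          apply Finset.sum_le_sum_of_subset_of_nonneg hsub
          intro j _ _; positivity
  have step2 : ∑ j ∈ Finset.range (n+1), ((n.choose j : ℝ) * (p * Real.exp l)^j * (1-p)^(n-j)) * Real.exp (-(l * ((n:ℝ)*(p+m))))
      = (p * Real.exp l + (1-p))^n * Real.exp (-(l * ((n:ℝ)*(p+m)))) := by
    rw [← Finset.sum_mul, add_pow]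
    congr 1
    apply Finset.sum_congr rfl
    intro j _; ring
  have step3 : (p * Real.exp l + (1-p))^n ≤ Real.exp ((n:ℝ) * (p * (l + 2*l^2))) := by
    have hb : p * Real.exp l + (1-p) ≤ Real.exp (p * (l + 2*l^2)) := by
      have h5 : Real.exp l ≤ 1 + (l + 2*l^2) := by
        have := exp_le_quad hl0 hl2; linarith
      have h6 : p * Real.exp l + (1-p) ≤ 1 + p * (l + 2*l^2) := by nlinarith
      have h7 := Real.add_one_le_exp (p * (l + 2*l^2))
      linarith
    calc (p * Real.exp l + (1-p))^n ≤ (Real.exp (p * (l + 2*l^2)))^n := by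
          apply pow_le_pow_left₀ (by positivity) hb
      _ = Real.exp ((n:ℝ) * (p * (l + 2*l^2))) := by rw [← Real.exp_nat_mul]
  have step4 : Real.exp ((n:ℝ) * (p * (l + 2*l^2))) * Real.exp (-(l * ((n:ℝ)*(p+m))))
      ≤ Real.exp (-(n:ℝ) * m^2 / 8) := by
    rw [← Real.exp_add]
    apply Real.exp_le_exp.mpr
    have hn0 : (0:ℝ) ≤ n := Nat.cast_nonneg n
    have : (n:ℝ) * (p * (l + 2*l^2)) + -(l * ((n:ℝ)*(p+m))) = (n:ℝ) * (2*p*l^2 - l*m) := by ring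
    rw [this, hl]
    have h8 : 2*p*(m/4)^2 - (m/4)*m ≤ -(m^2/8) := by nlinarith
    calc (n:ℝ) * (2*p*(m/4)^2 - (m/4)*m) ≤ (n:ℝ) * (-(m^2/8)) := by
          apply mul_le_mul_of_nonneg_left h8 hn0
      _ = -(n:ℝ) * m^2 / 8 := by ring
  calc ∑ j ∈ T, (n.choose j : ℝ) * p^j * (1-p)^(n-j)
      ≤ (p * Real.exp l + (1-p))^n * Real.exp (-(l * ((n:ℝ)*(p+m)))) := by
        rw [← step2]; exact step1
    _ ≤ Real.exp ((n:ℝ) * (p * (l + 2*l^2))) * Real.exp (-(l * ((n:ℝ)*(p+m)))) := by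
        apply mul_le_mul_of_nonneg_right step3 (Real.exp_nonneg _)
    _ ≤ Real.exp (-(n:ℝ) * m^2 / 8) := step4

lemma binom_lower_tail (n : ℕ) (p m : ℝ) (hp0 : 0 ≤ p) (hp1 : p ≤ 1)
    (hm0 : 0 < m) (hm1 : m ≤ 1) (T : Finset ℕ) (hTn : ∀ j ∈ T, j ≤ n)
    (hT : ∀ j ∈ T, (j:ℝ) ≤ (n:ℝ) * (p - m)) :
    ∑ j ∈ T, (n.choose j : ℝ) * p^j * (1-p)^(n-j) ≤ Real.exp (-(n:ℝ) * m^2 / 8) := by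
  have hre : ∑ j ∈ T, (n.choose j : ℝ) * p^j * (1-p)^(n-j)
      = ∑ k ∈ T.image (fun j => n - j), (n.choose k : ℝ) * (1-p)^k * (1-(1-p))^(n-k) := by
    rw [Finset.sum_image]
    · apply Finset.sum_congr rfl
      intro j hj
      have hjn := hTn j hj
      rw [Nat.choose_symm hjn, Nat.sub_sub_self hjn]
      ring_nf
    · intro a ha b hb hab
      have := hTn a ha; have := hTn b hb
      simp only at hab
      omega
  rw [hre]
  apply binom_upper_tail n (1-p) m (by linarith) (by linarith) hm0 hm1
  · intro k hk
    obtain ⟨j, hj, rfl⟩ := Finset.mem_image.mp hk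
    omega
  · intro k hk
    obtain ⟨j, hj, rfl⟩ := Finset.mem_image.mp hk
    have hjn := hTn j hj
    have h1 := hT j hj
    rw [Nat.cast_sub hjn]
    have hn0 : (0:ℝ) ≤ n := Nat.cast_nonneg n
    nlinarith

lemma binom_two_tails (n : ℕ) (p m : ℝ) (hp0 : 0 ≤ p) (hp1 : p ≤ 1)
    (hm0 : 0 < m) (hm1 : m ≤ 1) (hn : 1 ≤ n) (T : Finset ℕ) (hTn : ∀ j ∈ T, j ≤ n)
    (hT : ∀ j ∈ T, m ≤ |(j:ℝ)/n - p|) :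
    ∑ j ∈ T, (n.choose j : ℝ) * p^j * (1-p)^(n-j) ≤ 2 * Real.exp (-(n:ℝ) * m^2 / 8) := by
  have hn0 : (0:ℝ) < n := by exact_mod_cast hn
  classical
  rw [← Finset.sum_filter_add_sum_filter_not T (fun j : ℕ => p + m ≤ (j:ℝ)/(n:ℝ))]
  have h1 : ∑ j ∈ T.filter (fun j : ℕ => p + m ≤ (j:ℝ)/(n:ℝ)), (n.choose j : ℝ) * p^j * (1-p)^(n-j)
      ≤ Real.exp (-(n:ℝ) * m^2 / 8) := by
    apply binom_upper_tail n p m hp0 hp1 hm0 hm1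
    · intro j hj; exact hTn j (Finset.mem_filter.mp hj).1
    · intro j hj
      have := (Finset.mem_filter.mp hj).2
      rw [le_div_iff₀ hn0] at this
      linarith
  have h2 : ∑ j ∈ T.filter (fun j : ℕ => ¬ (p + m ≤ (j:ℝ)/(n:ℝ))), (n.choose j : ℝ) * p^j * (1-p)^(n-j)
      ≤ Real.exp (-(n:ℝ) * m^2 / 8) := by
    apply binom_lower_tail n p m hp0 hp1 hm0 hm1
    · intro j hj; exact hTn j (Finset.mem_filter.mp hj).1
    · intro j hj
      obtain ⟨hjT, hlt⟩ := Finset.mem_filter.mp hj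
      push_neg at hlt
      have habs := hT j hjT
      rcases le_abs.mp habs with h | h
      · exfalso
        have hd : p + m ≤ (j:ℝ)/(n:ℝ) := by linarith
        linarith
      · have h2 : (j:ℝ)/n - p ≤ -m := by
          have := neg_le_neg h
          simp at this
          linarith
        have : (j:ℝ)/n ≤ p - m := by linarith
        rw [div_le_iff₀ hn0] at this
        linarith
  linarith

lemma Ker_nonneg (c : ℝ) (n : ℕ) (i j : Fin (n+1)) : 0 ≤ Ker c n i j := by
  unfold Ker
  have h1 := _root_.sigmoid_pos (c * (i:ℕ) / n)
  have h2 := _root_.sigmoid_lt_one (c * (i:ℕ) / n)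
  have : (0:ℝ) ≤ 1 - _root_.sigmoid (c * (i:ℕ) / n) := by linarith
  positivity

lemma binom_sum (n : ℕ) (p : ℝ) :
    ∑ j : Fin (n+1), (n.choose (j:ℕ) : ℝ) * p ^ (j:ℕ) * (1-p) ^ (n - (j:ℕ)) = 1 := by
  rw [Fin.sum_univ_eq_sum_range (fun j => (n.choose j : ℝ) * p ^ j * (1-p) ^ (n - j))]
  have := add_pow p (1-p) n
  simp only [add_sub_cancel] at this
  calc ∑ j ∈ Finset.range (n+1), (n.choose j : ℝ) * p ^ j * (1-p) ^ (n - j)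
      = ∑ j ∈ Finset.range (n+1), p ^ j * (1-p) ^ (n - j) * (n.choose j : ℝ) := by
        apply Finset.sum_congr rfl; intro j _; ring
    _ = (p + (1-p))^n := (add_pow p (1-p) n).symm
    _ = 1 := by norm_num

lemma Ker_row_sum (c : ℝ) (n : ℕ) (i : Fin (n+1)) : ∑ j, Ker c n i j = 1 := by
  unfold Ker
  exact binom_sum n (_root_.sigmoid (c * (i:ℕ) / n))

lemma KerPow_nonneg (c : ℝ) (n : ℕ) (t : ℕ) (i j : Fin (n+1)) : 0 ≤ KerPow c n t i j := by
  induction t generalizing j with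
  | zero => unfold KerPow; split <;> norm_num
  | succ t ih =>
    unfold KerPow
    apply Finset.sum_nonneg
    intro k _
    exact mul_nonneg (ih k) (Ker_nonneg c n k j)

lemma KerPow_row_sum (c : ℝ) (n : ℕ) (t : ℕ) (i : Fin (n+1)) : ∑ j, KerPow c n t i j = 1 := by
  induction t with
  | zero =>
    unfold KerPow
    simp [Finset.sum_ite_eq]
  | succ t ih =>
    unfold KerPow
    rw [Finset.sum_comm]
    calc ∑ k, ∑ j, KerPow c n t i k * Ker c n k j
        = ∑ k, KerPow c n t i k * ∑ j, Ker c n k j := by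
          apply Finset.sum_congr rfl; intro k _; rw [Finset.mul_sum]
      _ = ∑ k, KerPow c n t i k := by
          apply Finset.sum_congr rfl; intro k _; rw [Ker_row_sum c n k, mul_one]
      _ = 1 := ih

lemma key_id (u : ℝ) (n j : ℕ) (hj : j ≤ n) :
    (1 + Real.exp u)^n * (_root_.sigmoid u ^ j * (1 - _root_.sigmoid u)^(n-j)) = Real.exp (u * j) := by
  rw [one_sub_sigmoid]
  unfold _root_.sigmoid
  rw [div_pow, div_pow, one_pow]
  have hpos : (0:ℝ) < 1 + Real.exp u := one_add_exp_pos u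
  have hkey : (1 + Real.exp u)^j * (1 + Real.exp u)^(n-j) = (1 + Real.exp u)^n := by
    rw [← pow_add, Nat.add_sub_cancel' hj]
  have hexp : Real.exp u ^ j = Real.exp (u * j) := by
    rw [← Real.exp_nat_mul]; ring_nf
  field_simp
  rw [← hexp, ← hkey]

lemma piWeight_pos (c : ℝ) (n : ℕ) (j : Fin (n+1)) : 0 < piWeight c n j := by
  unfold piWeight
  have h1 : 0 < (n.choose (j:ℕ) : ℝ) := by
    have := Nat.choose_pos (Nat.lt_succ_iff.mp j.isLt)
    exact_mod_cast this
  have h2 := one_add_exp_pos (c * (j:ℕ) / n)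
  positivity

lemma piDist_nonneg (c : ℝ) (n : ℕ) (j : Fin (n+1)) : 0 ≤ piDist c n j := by
  unfold piDist
  apply div_nonneg (le_of_lt (piWeight_pos c n j))
  apply Finset.sum_nonneg
  intro k _; exact le_of_lt (piWeight_pos c n k)

lemma piDist_sum (c : ℝ) (n : ℕ) : ∑ j, piDist c n j = 1 := by
  unfold piDist
  rw [← Finset.sum_div]
  apply div_self
  apply ne_of_gt
  apply Finset.sum_pos (fun k _ => piWeight_pos c n k) Finset.univ_nonempty

lemma piWeight_stationary (c : ℝ) (n : ℕ) (j : Fin (n+1)) :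
    ∑ i, piWeight c n i * Ker c n i j = piWeight c n j := by
  have step1 : ∀ i : Fin (n+1), piWeight c n i * Ker c n i j
      = (n.choose (i:ℕ) : ℝ) * (n.choose (j:ℕ) : ℝ) * Real.exp (c * (j:ℕ) / n) ^ (i:ℕ) := by
    intro i
    unfold piWeight Ker
    have hj : (j:ℕ) ≤ n := Nat.lt_succ_iff.mp j.isLt
    have := key_id (c * (i:ℕ) / n) n (j:ℕ) hj
    calc (n.choose (i:ℕ) : ℝ) * (1 + Real.exp (c * (i:ℕ) / n)) ^ n *
          ((n.choose (j:ℕ) : ℝ) * _root_.sigmoid (c * (i:ℕ) / n) ^ (j:ℕ) *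
            (1 - _root_.sigmoid (c * (i:ℕ) / n)) ^ (n - (j:ℕ)))
        = (n.choose (i:ℕ) : ℝ) * (n.choose (j:ℕ) : ℝ) *
            ((1 + Real.exp (c * (i:ℕ) / n)) ^ n *
              (_root_.sigmoid (c * (i:ℕ) / n) ^ (j:ℕ) * (1 - _root_.sigmoid (c * (i:ℕ) / n)) ^ (n - (j:ℕ)))) := by
          ring
      _ = (n.choose (i:ℕ) : ℝ) * (n.choose (j:ℕ) : ℝ) * Real.exp ((c * (i:ℕ) / n) * (j:ℕ)) := by
          rw [this]
      _ = (n.choose (i:ℕ) : ℝ) * (n.choose (j:ℕ) : ℝ) * Real.exp (c * (j:ℕ) / n) ^ (i:ℕ) := by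
          rw [← Real.exp_nat_mul]
          congr 2
          ring
  rw [Finset.sum_congr rfl (fun i _ => step1 i)]
  have : ∑ i : Fin (n+1), (n.choose (i:ℕ) : ℝ) * (n.choose (j:ℕ) : ℝ) * Real.exp (c * (j:ℕ) / n) ^ (i:ℕ)
      = (n.choose (j:ℕ) : ℝ) * ∑ i : Fin (n+1), (n.choose (i:ℕ) : ℝ) * Real.exp (c * (j:ℕ) / n) ^ (i:ℕ) := by
    rw [Finset.mul_sum]
    apply Finset.sum_congr rfl; intro i _; ring
  rw [this]
  have hbin : ∑ i : Fin (n+1), (n.choose (i:ℕ) : ℝ) * Real.exp (c * (j:ℕ) / n) ^ (i:ℕ)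
      = (1 + Real.exp (c * (j:ℕ) / n)) ^ n := by
    rw [Fin.sum_univ_eq_sum_range (fun i => (n.choose i : ℝ) * Real.exp (c * (j:ℕ) / n) ^ i)]
    have := add_pow (Real.exp (c * (j:ℕ) / n)) 1 n
    simp only [one_pow, mul_one] at this
    rw [add_comm (Real.exp (c * (j:ℕ) / n)) 1] at this
    rw [this]
    apply Finset.sum_congr rfl; intro i _; ring
  rw [hbin]
  unfold piWeight
  ring

lemma piDist_stationary (c : ℝ) (n : ℕ) (j : Fin (n+1)) :
    ∑ i, piDist c n i * Ker c n i j = piDist c n j := by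
  unfold piDist
  rw [← piWeight_stationary c n j, Finset.sum_div]
  apply Finset.sum_congr rfl
  intro i _
  ring

lemma le_tvDist {m : ℕ} (p q : Fin m → ℝ) (A : Finset (Fin m)) :
    |∑ i ∈ A, p i - ∑ i ∈ A, q i| ≤ tvDist p q := by
  have h := le_ciSup (f := fun B : Finset (Fin m) => |∑ i ∈ B, p i - ∑ i ∈ B, q i|)
    (Set.Finite.bddAbove (Set.finite_range _)) A
  exact h

lemma tvDist_le {m : ℕ} (p q : Fin m → ℝ) (B : ℝ)
    (h : ∀ A : Finset (Fin m), |∑ i ∈ A, p i - ∑ i ∈ A, q i| ≤ B) : tvDist p q ≤ B :=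
  ciSup_le h

lemma Ker_pos (c : ℝ) (n : ℕ) (i j : Fin (n+1)) : 0 < Ker c n i j := by
  unfold Ker
  have h1 := _root_.sigmoid_pos (c * (i:ℕ) / n)
  have h2 := _root_.sigmoid_lt_one (c * (i:ℕ) / n)
  have h3 : (0:ℝ) < 1 - _root_.sigmoid (c * (i:ℕ) / n) := by linarith
  have h4 : 0 < (n.choose (j:ℕ) : ℝ) := by
    exact_mod_cast Nat.choose_pos (Nat.lt_succ_iff.mp j.isLt)
  positivity

section Dobrushin
variable (c : ℝ) (n : ℕ)

noncomputable def kerMin : ℝ :=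
  Finset.inf' Finset.univ (Finset.univ_nonempty) (fun p : Fin (n+1) × Fin (n+1) => Ker c n p.1 p.2)

lemma kerMin_pos : 0 < kerMin c n := by
  rw [kerMin, Finset.lt_inf'_iff]
  intro p _
  exact Ker_pos c n p.1 p.2

lemma kerMin_le (i j : Fin (n+1)) : kerMin c n ≤ Ker c n i j :=
  Finset.inf'_le _ (Finset.mem_univ (i, j))

lemma kerMin_card_le : ((n:ℝ)+1) * kerMin c n ≤ 1 := by
  have h : ∑ j : Fin (n+1), kerMin c n ≤ ∑ j, Ker c n 0 j :=
    Finset.sum_le_sum (fun j _ => kerMin_le c n 0 j)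
  rw [Ker_row_sum] at h
  simpa using h

lemma K_set_lower (i : Fin (n+1)) (A : Finset (Fin (n+1))) :
    (A.card : ℝ) * kerMin c n ≤ ∑ j ∈ A, Ker c n i j := by
  calc (A.card : ℝ) * kerMin c n = ∑ _j ∈ A, kerMin c n := by
        rw [Finset.sum_const, nsmul_eq_mul]
    _ ≤ ∑ j ∈ A, Ker c n i j := Finset.sum_le_sum (fun j _ => kerMin_le c n i j)

lemma K_set_upper (i : Fin (n+1)) (A : Finset (Fin (n+1))) :
    ∑ j ∈ A, Ker c n i j ≤ 1 - (Aᶜ.card : ℝ) * kerMin c n := by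
  have h1 : ∑ j ∈ A, Ker c n i j + ∑ j ∈ Aᶜ, Ker c n i j = 1 := by
    rw [Finset.sum_add_sum_compl]; exact Ker_row_sum c n i
  have h2 := K_set_lower c n i Aᶜ
  linarith

lemma dobrushin (μ ν : Fin (n+1) → ℝ) (hμ0 : ∀ i, 0 ≤ μ i) (hν0 : ∀ i, 0 ≤ ν i)
    (hμs : ∑ i, μ i = 1) (hνs : ∑ i, ν i = 1) :
    tvDist (fun j => ∑ i, μ i * Ker c n i j) (fun j => ∑ i, ν i * Ker c n i j)
      ≤ (1 - ((n:ℝ)+1) * kerMin c n) * tvDist μ ν := by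
  classical
  set ε := kerMin c n with hε
  set d : Fin (n+1) → ℝ := fun i => μ i - ν i with hd
  set S : Finset (Fin (n+1)) := Finset.univ.filter (fun i => 0 ≤ d i) with hS
  set P : ℝ := ∑ i ∈ S, d i with hP
  have hdsum : ∑ i, d i = 0 := by
    simp only [hd, Finset.sum_sub_distrib, hμs, hνs, sub_self]
  have hScompl : ∑ i ∈ Sᶜ, d i = -P := by
    have := Finset.sum_add_sum_compl S d
    rw [hdsum] at this
    linarith [this]
  have hP0 : 0 ≤ P := Finset.sum_nonneg (fun i hi => (Finset.mem_filter.mp hi).2)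
  have hPle : P ≤ tvDist μ ν := by
    have h := le_tvDist μ ν S
    have heq : ∑ i ∈ S, μ i - ∑ i ∈ S, ν i = P := by
      rw [hP, hd, Finset.sum_sub_distrib]
    rw [heq] at h
    calc P ≤ |P| := le_abs_self P
      _ ≤ tvDist μ ν := h
  have halpha : (0:ℝ) ≤ 1 - ((n:ℝ)+1) * ε := by
    have := kerMin_card_le c n
    linarith
  apply tvDist_le
  intro A
  set KA : Fin (n+1) → ℝ := fun i => ∑ j ∈ A, Ker c n i j with hKA
  have hswap : ∑ i ∈ A, ((fun j => ∑ i, μ i * Ker c n i j) i - (fun j => ∑ i, ν i * Ker c n i j) i)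
      = ∑ i, d i * KA i := by
    calc ∑ j ∈ A, ((∑ i, μ i * Ker c n i j) - (∑ i, ν i * Ker c n i j))
        = ∑ j ∈ A, ∑ i, d i * Ker c n i j := by
          apply Finset.sum_congr rfl; intro j _
          rw [← Finset.sum_sub_distrib]
          apply Finset.sum_congr rfl; intro i _; simp [hd]; ring
      _ = ∑ i, ∑ j ∈ A, d i * Ker c n i j := Finset.sum_comm
      _ = ∑ i, d i * KA i := by
          apply Finset.sum_congr rfl; intro i _; rw [Finset.mul_sum]
  rw [Finset.sum_sub_distrib] at hswap
  rw [show ∑ i ∈ A, (fun j => ∑ i, μ i * Ker c n i j) i - ∑ i ∈ A, (fun j => ∑ i, ν i * Ker c n i j) i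
      = ∑ i, d i * KA i from hswap]
  have hcard : (A.card : ℝ) + (Aᶜ.card : ℝ) = (n:ℝ) + 1 := by
    have := Finset.card_add_card_compl A
    have h2 : (A.card + Aᶜ.card : ℝ) = ((n+1 : ℕ) : ℝ) := by
      exact_mod_cast congrArg (Nat.cast (R := ℝ)) (this.trans (by simp))
    push_cast at h2 ⊢
    linarith
  have hub : ∀ i, KA i ≤ 1 - (Aᶜ.card : ℝ) * ε := fun i => K_set_upper c n i A
  have hlb : ∀ i, (A.card : ℝ) * ε ≤ KA i := fun i => K_set_lower c n i A
  have hsplit : ∑ i, d i * KA i = ∑ i ∈ S, d i * KA i + ∑ i ∈ Sᶜ, d i * KA i :=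
    (Finset.sum_add_sum_compl S _).symm
  have hup : ∑ i, d i * KA i ≤ P * (1 - ((n:ℝ)+1) * ε) := by
    rw [hsplit]
    have h1 : ∑ i ∈ S, d i * KA i ≤ ∑ i ∈ S, d i * (1 - (Aᶜ.card : ℝ) * ε) := by
      apply Finset.sum_le_sum
      intro i hi
      exact mul_le_mul_of_nonneg_left (hub i) (Finset.mem_filter.mp hi).2
    have h2 : ∑ i ∈ Sᶜ, d i * KA i ≤ ∑ i ∈ Sᶜ, d i * ((A.card : ℝ) * ε) := by
      apply Finset.sum_le_sum
      intro i hi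
      have hdi : d i ≤ 0 := by
        have := Finset.mem_compl.mp hi
        simp only [hS, Finset.mem_filter, Finset.mem_univ, true_and] at this
        linarith [not_le.mp this]
      exact mul_le_mul_of_nonpos_left (hlb i) hdi
    have h3 : ∑ i ∈ S, d i * (1 - (Aᶜ.card : ℝ) * ε) = P * (1 - (Aᶜ.card : ℝ) * ε) := by
      rw [← Finset.sum_mul, ← hP]
    have h4 : ∑ i ∈ Sᶜ, d i * ((A.card : ℝ) * ε) = -P * ((A.card : ℝ) * ε) := by
      rw [← Finset.sum_mul, hScompl]
    have h5 : P * (1 - (Aᶜ.card : ℝ) * ε) + -P * ((A.card : ℝ) * ε)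
        = P * (1 - ((n:ℝ)+1) * ε) := by rw [← hcard]; ring
    linarith [h1, h2, h3, h4, h5]
  have hdown : -(P * (1 - ((n:ℝ)+1) * ε)) ≤ ∑ i, d i * KA i := by
    rw [hsplit]
    have h1 : ∑ i ∈ S, d i * ((A.card : ℝ) * ε) ≤ ∑ i ∈ S, d i * KA i := by
      apply Finset.sum_le_sum
      intro i hi
      exact mul_le_mul_of_nonneg_left (hlb i) (Finset.mem_filter.mp hi).2
    have h2 : ∑ i ∈ Sᶜ, d i * (1 - (Aᶜ.card : ℝ) * ε) ≤ ∑ i ∈ Sᶜ, d i * KA i := by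
      apply Finset.sum_le_sum
      intro i hi
      have hdi : d i ≤ 0 := by
        have := Finset.mem_compl.mp hi
        simp only [hS, Finset.mem_filter, Finset.mem_univ, true_and] at this
        linarith [not_le.mp this]
      exact mul_le_mul_of_nonpos_left (hub i) hdi
    have h3 : ∑ i ∈ S, d i * ((A.card : ℝ) * ε) = P * ((A.card : ℝ) * ε) := by
      rw [← Finset.sum_mul, ← hP]
    have h4 : ∑ i ∈ Sᶜ, d i * (1 - (Aᶜ.card : ℝ) * ε) = -P * (1 - (Aᶜ.card : ℝ) * ε) := by
      rw [← Finset.sum_mul, hScompl]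
    have h5 : P * ((A.card : ℝ) * ε) + -P * (1 - (Aᶜ.card : ℝ) * ε)
        = -(P * (1 - ((n:ℝ)+1) * ε)) := by rw [← hcard]; ring
    linarith [h1, h2, h3, h4, h5]
  have habs : |∑ i, d i * KA i| ≤ P * (1 - ((n:ℝ)+1) * ε) := abs_le.mpr ⟨hdown, hup⟩
  calc |∑ i, d i * KA i| ≤ P * (1 - ((n:ℝ)+1) * ε) := habs
    _ ≤ tvDist μ ν * (1 - ((n:ℝ)+1) * ε) := mul_le_mul_of_nonneg_right hPle halpha
    _ = (1 - ((n:ℝ)+1) * ε) * tvDist μ ν := mul_comm _ _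

end Dobrushin

lemma tv_contract_pow (c : ℝ) (n : ℕ) (x : Fin (n+1)) (t : ℕ) :
    tvDist (KerPow c n t x) (piDist c n) ≤ (1 - ((n:ℝ)+1) * kerMin c n)^t := by
  induction t with
  | zero =>
    rw [pow_zero]
    apply tvDist_le
    intro A
    have h1 : 0 ≤ ∑ i ∈ A, KerPow c n 0 x i :=
      Finset.sum_nonneg (fun i _ => KerPow_nonneg c n 0 x i)
    have h2 : ∑ i ∈ A, KerPow c n 0 x i ≤ 1 := by
      rw [← KerPow_row_sum c n 0 x]
      apply Finset.sum_le_sum_of_subset_of_nonneg (Finset.subset_univ A)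
      intro i _ _; exact KerPow_nonneg c n 0 x i
    have h3 : 0 ≤ ∑ i ∈ A, piDist c n i :=
      Finset.sum_nonneg (fun i _ => piDist_nonneg c n i)
    have h4 : ∑ i ∈ A, piDist c n i ≤ 1 := by
      rw [← piDist_sum c n]
      apply Finset.sum_le_sum_of_subset_of_nonneg (Finset.subset_univ A)
      intro i _ _; exact piDist_nonneg c n i
    rw [abs_le]; constructor <;> linarith
  | succ t ih =>
    have heq1 : KerPow c n (t+1) x = fun j => ∑ k, KerPow c n t x k * Ker c n k j := rfl
    have heq2 : piDist c n = fun j => ∑ i, piDist c n i * Ker c n i j := by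
      funext j; exact (piDist_stationary c n j).symm
    have halpha : (0:ℝ) ≤ 1 - ((n:ℝ)+1) * kerMin c n := by
      have := kerMin_card_le c n; linarith
    calc tvDist (KerPow c n (t+1) x) (piDist c n)
        = tvDist (fun j => ∑ k, KerPow c n t x k * Ker c n k j)
            (fun j => ∑ i, piDist c n i * Ker c n i j) := by rw [← heq1, ← heq2]
      _ ≤ (1 - ((n:ℝ)+1) * kerMin c n) * tvDist (KerPow c n t x) (piDist c n) :=
          dobrushin c n _ _ (fun i => KerPow_nonneg c n t x i) (fun i => piDist_nonneg c n i)
            (KerPow_row_sum c n t x) (piDist_sum c n)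
      _ ≤ (1 - ((n:ℝ)+1) * kerMin c n) * (1 - ((n:ℝ)+1) * kerMin c n)^t :=
          mul_le_mul_of_nonneg_left ih halpha
      _ = (1 - ((n:ℝ)+1) * kerMin c n)^(t+1) := (pow_succ' _ _).symm

lemma mixing_exists (c : ℝ) (n : ℕ) (x : Fin (n+1)) (ε : ℝ) (hε : 0 < ε) :
    ∃ t, tvDist (KerPow c n t x) (piDist c n) < ε := by
  have h1 : 1 - ((n:ℝ)+1) * kerMin c n < 1 := by
    have h := kerMin_pos c n
    have hn : (0:ℝ) < (n:ℝ)+1 := by positivity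
    nlinarith
  obtain ⟨t, ht⟩ := exists_pow_lt_of_lt_one hε h1
  exact ⟨t, lt_of_le_of_lt (tv_contract_pow c n x t) ht⟩

lemma sigmoid_zero : _root_.sigmoid 0 = 1/2 := by unfold _root_.sigmoid; norm_num

lemma dynamics (xs c : ℝ)
    (hxs : 0 < xs ∧ xs * Real.exp xs / (1 + Real.exp xs) = 1)
    (hc : c < -1 - xs - Real.exp xs) :
    ∃ a b₁ b₂ mm : ℝ, 0 < mm ∧ mm ≤ 1 ∧ b₂ < a ∧ a < 1 ∧
      (∀ x, a ≤ x → x ≤ 1 → b₁ ≤ _root_.sigmoid (c*x) - mm ∧ _root_.sigmoid (c*x) + mm ≤ b₂) ∧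
      (∀ y, b₁ ≤ y → y ≤ b₂ → a ≤ _root_.sigmoid (c*y) - mm ∧ _root_.sigmoid (c*y) + mm ≤ 1) := by
  obtain ⟨hxs0, hxs1⟩ := hxs
  have hexs := Real.exp_pos xs
  have hc0 : c < 0 := by nlinarith
  set f : ℝ → ℝ := fun x => _root_.sigmoid (c * x) with hf
  have hfanti : StrictAnti f := by
    intro x y hxy
    exact _root_.sigmoid_strictMono (by nlinarith : c * y < c * x)
  have hfc : Continuous f := sigmoid_continuous.comp (continuous_const.mul continuous_id)
  have hfd : ∀ x, HasDerivAt f (_root_.sigmoid (c*x) * (1 - _root_.sigmoid (c*x)) * c) x := by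
    intro x
    have h1 : HasDerivAt (fun x : ℝ => c * x) c x := by
      simpa using (hasDerivAt_id x).const_mul c
    exact (_root_.hasDerivAt_sigmoid (c*x)).comp x h1
  -- fixed point
  have hiv : ∃ x₀ ∈ Set.Icc (0:ℝ) 1, f x₀ - x₀ = 0 := by
    have hcont : ContinuousOn (fun x => f x - x) (Set.Icc 0 1) :=
      (hfc.sub continuous_id).continuousOn
    have h0 : f 0 - 0 = 1/2 := by simp [hf, _root_.sigmoid_zero]
    have h1 : f 1 - 1 < 0 := by
      have := _root_.sigmoid_lt_one (c * 1); simp only [hf]; linarith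
    have hmem : (0:ℝ) ∈ Set.Icc (f 1 - 1) (f 0 - 0) := by
      constructor <;> [linarith; linarith]
    have := intermediate_value_Icc' (by norm_num : (0:ℝ) ≤ 1) hcont hmem
    obtain ⟨x₀, hx₀, hfx₀⟩ := this
    exact ⟨x₀, hx₀, hfx₀⟩
  obtain ⟨x₀, hx₀mem, hx₀fix'⟩ := hiv
  have hx₀fix : f x₀ = x₀ := by linarith
  have hx₀pos : 0 < x₀ := by rw [← hx₀fix]; exact _root_.sigmoid_pos _
  have hx₀lt1 : x₀ < 1 := by rw [← hx₀fix]; exact _root_.sigmoid_lt_one _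
  -- u and the derivative bound
  set u : ℝ := -(c * x₀) with hu_def
  have hu0 : 0 < u := by rw [hu_def]; nlinarith
  have hx₀eq : x₀ = 1 / (1 + Real.exp u) := by
    have h1 : f x₀ = Real.exp (c * x₀) / (1 + Real.exp (c * x₀)) := rfl
    rw [hx₀fix] at h1
    have h2 : Real.exp (c * x₀) = 1 / Real.exp u := by
      rw [hu_def, one_div, ← Real.exp_neg, neg_neg]
    rw [h2] at h1
    have he := Real.exp_pos u
    rw [h1]
    field_simp
    ring
  have hcu : -c = u * (1 + Real.exp u) := by
    have he := one_add_exp_pos u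
    have h3 : u = -c * x₀ := by rw [hu_def]; ring
    rw [hx₀eq] at h3
    field_simp at h3
    linarith
  have hxs2 : xs * Real.exp xs = 1 + Real.exp xs := by
    have h := hxs1
    field_simp at h
    linarith
  have hcstar : xs * (1 + Real.exp xs) < -c := by nlinarith
  have hugt : xs < u := by
    by_contra h
    push_neg at h
    have : u * (1 + Real.exp u) ≤ xs * (1 + Real.exp xs) := by
      have h2 : Real.exp u ≤ Real.exp xs := Real.exp_le_exp.mpr h
      nlinarith
    rw [← hcu] at this
    linarith
  set D : ℝ := -c * x₀ * (1 - x₀) with hD_def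
  have hD_eq : D = u * _root_.sigmoid u := by
    rw [hD_def, hcu, hx₀eq]
    unfold _root_.sigmoid
    have he := one_add_exp_pos u
    field_simp
    ring
  have hD1 : 1 < D := by
    rw [hD_eq]
    have h1 : xs * _root_.sigmoid xs = 1 := by
      unfold _root_.sigmoid
      rw [← mul_div_assoc]
      exact hxs1
    have h2 : _root_.sigmoid xs < _root_.sigmoid u := _root_.sigmoid_strictMono hugt
    have h3 := _root_.sigmoid_pos xs
    nlinarith
  -- g and its derivative at x₀
  set g : ℝ → ℝ := fun x => f (f x) with hg
  have hgx₀ : g x₀ = x₀ := by rw [hg]; simp only [hx₀fix]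
  have hfd_x₀ : HasDerivAt f (x₀ * (1 - x₀) * c) x₀ := by
    have := hfd x₀
    rw [show _root_.sigmoid (c * x₀) = x₀ from hx₀fix] at this
    exact this
  have hgd : HasDerivAt g (D^2) x₀ := by
    have h1 : HasDerivAt f (x₀ * (1 - x₀) * c) (f x₀) := by rw [hx₀fix]; exact hfd_x₀
    have h2 := h1.comp x₀ hfd_x₀
    have : x₀ * (1 - x₀) * c * (x₀ * (1 - x₀) * c) = D^2 := by rw [hD_def]; ring
    rw [this] at h2
    exact h2
  -- find a
  have hD2 : 1 < D^2 := by nlinarith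
  have hslope := hasDerivAt_iff_tendsto_slope.mp hgd
  have hev1 : ∀ᶠ z in 𝓝[≠] x₀, 1 < slope g x₀ z :=
    hslope.eventually (eventually_gt_nhds hD2)
  have hev2 : ∀ᶠ z in 𝓝[>] x₀, 1 < slope g x₀ z :=
    hev1.filter_mono (nhdsWithin_mono x₀ (fun z hz => ne_of_gt hz))
  have hev3 : Set.Ioo x₀ 1 ∈ 𝓝[>] x₀ := Ioo_mem_nhdsGT_of_mem ⟨le_refl x₀, hx₀lt1⟩
  obtain ⟨a, hslope_a, ha_mem⟩ := (hev2.and (eventually_of_mem hev3 (fun z hz => hz))).exists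
  have hax₀ : x₀ < a := ha_mem.1
  have ha1 : a < 1 := ha_mem.2
  have hga : a < g a := by
    have hs : slope g x₀ a = (g a - g x₀) / (a - x₀) := by
      rw [slope_def_field]
    rw [hs, hgx₀] at hslope_a
    have hax : 0 < a - x₀ := by linarith
    rw [lt_div_iff₀ hax] at hslope_a
    linarith
  -- margins
  have hg1 : g 1 < 1 := _root_.sigmoid_lt_one _
  have hg1pos : 0 < g 1 := _root_.sigmoid_pos _
  set m1 : ℝ := min (g a - a) (1 - g 1) with hm1_def
  have hm1 : 0 < m1 := lt_min (by linarith) (by linarith)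
  have hm1le : m1 ≤ 1 - g 1 := min_le_right _ _
  have hm1le' : m1 ≤ g a - a := min_le_left _ _
  -- continuity choices
  obtain ⟨δ₁, hδ₁0, hδ₁⟩ := Metric.continuousAt_iff.mp (hfc.continuousAt (x := f a)) (m1/2) (by positivity)
  obtain ⟨δ₂, hδ₂0, hδ₂⟩ := Metric.continuousAt_iff.mp (hfc.continuousAt (x := f 1)) (m1/2) (by positivity)
  have hfa_lt_a : f a < a := by
    have : f a < f x₀ := hfanti hax₀
    rw [hx₀fix] at this
    linarith
  set m2 : ℝ := min (min (δ₁/2) (δ₂/2)) ((a - f a)/2) with hm2_def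
  have hm2 : 0 < m2 := lt_min (lt_min (by linarith) (by linarith)) (by linarith)
  set mm : ℝ := min m2 (m1/2) with hmm_def
  have hmm0 : 0 < mm := lt_min hm2 (by linarith)
  have hmm_le_m2 : mm ≤ m2 := min_le_left _ _
  have hmm_le_m1 : mm ≤ m1/2 := min_le_right _ _
  have hmm1 : mm ≤ 1 := by
    have : m1 ≤ 1 := by linarith
    linarith
  refine ⟨a, f 1 - m2, f a + m2, mm, hmm0, hmm1, ?_, ha1, ?_, ?_⟩
  · -- b₂ < a
    have : m2 ≤ (a - f a)/2 := min_le_right _ _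
    linarith
  · -- x ∈ [a,1] maps into [b₁+mm, b₂-mm]
    intro x hxa hx1
    have hfx_le : f x ≤ f a := (hfanti.antitone) hxa
    have hfx_ge : f 1 ≤ f x := (hfanti.antitone) hx1
    constructor
    · show f 1 - m2 ≤ f x - mm
      linarith
    · show f x + mm ≤ f a + m2
      linarith
  · -- y ∈ [b₁,b₂] maps into [a+mm, 1-mm]
    intro y hy1 hy2
    have hlow : a + m1/2 ≤ f (f a + m2) := by
      have hd : dist (f a + m2) (f a) < δ₁ := by
        rw [Real.dist_eq, abs_of_nonneg (by linarith : (0:ℝ) ≤ f a + m2 - f a)]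
        have : m2 ≤ δ₁/2 := le_trans (min_le_left _ _) (min_le_left _ _)
        simp only [add_sub_cancel_left]
        linarith
      have := hδ₁ hd
      rw [Real.dist_eq, abs_lt] at this
      have hgaeq : f (f a) = g a := rfl
      have : g a - m1/2 < f (f a + m2) := by
        rw [← hgaeq]; linarith
      linarith
    have hhigh : f (f 1 - m2) ≤ 1 - m1/2 := by
      have hd : dist (f 1 - m2) (f 1) < δ₂ := by
        rw [Real.dist_eq]
        have : m2 ≤ δ₂/2 := le_trans (min_le_left _ _) (min_le_right _ _)
        rw [abs_of_nonpos (by linarith : f 1 - m2 - f 1 ≤ 0)]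
        linarith
      have := hδ₂ hd
      rw [Real.dist_eq, abs_lt] at this
      have hg1eq : f (f 1) = g 1 := rfl
      have : f (f 1 - m2) < g 1 + m1/2 := by
        rw [← hg1eq] at *; linarith
      linarith
    have hfy_ge : f (f a + m2) ≤ f y := (hfanti.antitone) hy2
    have hfy_le : f y ≤ f (f 1 - m2) := (hfanti.antitone) hy1
    constructor
    · show a ≤ f y - mm
      linarith
    · show f y + mm ≤ 1
      linarith

lemma kernel_conc (c : ℝ) (n : ℕ) (hn : 1 ≤ n) (mm : ℝ) (hmm0 : 0 < mm) (hmm1 : mm ≤ 1)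
    (k : Fin (n+1)) (P : Fin (n+1) → Prop) [DecidablePred P]
    (hsub : ∀ j : Fin (n+1), |((j:ℕ):ℝ)/(n:ℝ) - _root_.sigmoid (c * (k:ℕ) / n)| < mm → P j) :
    1 - 2 * Real.exp (-(n:ℝ) * mm^2/8) ≤ ∑ j ∈ Finset.univ.filter P, Ker c n k j := by
  classical
  set p := _root_.sigmoid (c * (k:ℕ) / n) with hp
  have hsplit : ∑ j ∈ Finset.univ.filter P, Ker c n k j
      + ∑ j ∈ Finset.univ.filter (fun j => ¬ P j), Ker c n k j = 1 := by
    rw [Finset.sum_filter_add_sum_filter_not]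
    exact Ker_row_sum c n k
  have himg : ∑ j ∈ Finset.univ.filter (fun j => ¬ P j), Ker c n k j
      = ∑ jn ∈ (Finset.univ.filter (fun j => ¬ P j)).image Fin.val,
          (n.choose jn : ℝ) * p^jn * (1-p)^(n - jn) := by
    rw [Finset.sum_image (fun x _ y _ h => Fin.val_injective h)]
    apply Finset.sum_congr rfl
    intro j _
    rfl
  have hbound : ∑ jn ∈ (Finset.univ.filter (fun j => ¬ P j)).image Fin.val,
      (n.choose jn : ℝ) * p^jn * (1-p)^(n - jn) ≤ 2 * Real.exp (-(n:ℝ) * mm^2/8) := by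
    apply binom_two_tails n p mm (le_of_lt (_root_.sigmoid_pos _)) (le_of_lt (_root_.sigmoid_lt_one _))
      hmm0 hmm1 hn
    · intro jn hjn
      obtain ⟨j, _, rfl⟩ := Finset.mem_image.mp hjn
      exact Nat.lt_succ_iff.mp j.isLt
    · intro jn hjn
      obtain ⟨j, hj, rfl⟩ := Finset.mem_image.mp hjn
      have hnotP : ¬ P j := (Finset.mem_filter.mp hj).2
      by_contra h
      push_neg at h
      exact hnotP (hsub j h)
  have hdiv : (-(n:ℝ)) * mm^2/8 = -(n:ℝ) * mm^2/8 := rfl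
  linarith [hsplit, himg ▸ hbound]

end Aux

set_option maxHeartbeats 2000000 in
/-- If c < c⋆, the mixing time is at least exp(ψ_c n)/8. -/
theorem slow_mixing_exp (xs c : ℝ)
    (hxs : 0 < xs ∧ xs * Real.exp xs / (1 + Real.exp xs) = 1)
    (hc : c < -1 - xs - Real.exp xs) :
    ∃ ψ > (0:ℝ), ∀ n : ℕ, 1 ≤ n →
      (mixTime c n (1/4) : ℝ) ≥ Real.exp (ψ * n) / 8 := by
  classical
  obtain ⟨a, b₁, b₂, mm, hmm0, hmm1, hb₂a, ha1, hI, hJ⟩ := dynamics xs c hxs hc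
  set β : ℝ := mm^2/8 with hβ_def
  have hβ0 : 0 < β := by positivity
  set N₀ : ℝ := 2 * Real.log 16 / β with hN₀_def
  have hlog16 : 0 < Real.log 16 := Real.log_pos (by norm_num)
  have hN₀0 : 0 < N₀ := by positivity
  set ψ : ℝ := min (β/2) (Real.log 8 / (N₀ + 1)) with hψ_def
  have hlog8 : 0 < Real.log 8 := Real.log_pos (by norm_num)
  have hψ0 : 0 < ψ := lt_min (by positivity) (by positivity)
  refine ⟨ψ, hψ0, ?_⟩
  intro n hn
  have hn0 : (0:ℝ) < n := by exact_mod_cast hn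
  -- mixTime ≥ 1 always
  have hmix1 : 1 ≤ mixTime c n (1/4) := by
    obtain ⟨x, hx⟩ : ∃ x : Fin (n+1), piDist c n x ≤ 1/2 := by
      by_contra h
      push_neg at h
      have hsum : ∑ j : Fin (n+1), (1/2:ℝ) < ∑ j, piDist c n j :=
        Finset.sum_lt_sum_of_nonempty Finset.univ_nonempty (fun j _ => h j)
      rw [piDist_sum] at hsum
      simp only [Finset.sum_const, Finset.card_univ, Fintype.card_fin, nsmul_eq_mul] at hsum
      have : ((n:ℝ)+1) * (1/2) < 1 := by push_cast at hsum ⊢; linarith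
      have hn1 : (1:ℝ) ≤ (n:ℝ) := by exact_mod_cast hn
      linarith
    have h0notin : (0:ℕ) ∉ {t : ℕ | tvDist (KerPow c n t x) (piDist c n) < 1/4} := by
      intro h0
      simp only [Set.mem_setOf_eq] at h0
      have hA := le_tvDist (KerPow c n 0 x) (piDist c n) {x}
      have h1 : ∑ i ∈ ({x} : Finset (Fin (n+1))), KerPow c n 0 x i = 1 := by
        simp [KerPow]
      have h2 : ∑ i ∈ ({x} : Finset (Fin (n+1))), piDist c n i = piDist c n x := by
        simp
      rw [h1, h2] at hA
      have : (1:ℝ) - piDist c n x ≥ 1/2 := by linarith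
      have habs : |1 - piDist c n x| ≥ 1/2 := by
        rw [abs_of_nonneg (by linarith)]; linarith
      linarith
    obtain ⟨t, ht⟩ := mixing_exists c n x (1/4) (by norm_num)
    have hne : {t : ℕ | tvDist (KerPow c n t x) (piDist c n) < 1/4}.Nonempty := ⟨t, ht⟩
    have hmem := Nat.sInf_mem hne
    have hge1 : 1 ≤ sInf {t : ℕ | tvDist (KerPow c n t x) (piDist c n) < 1/4} := by
      rcases Nat.eq_zero_or_pos (sInf {t : ℕ | tvDist (KerPow c n t x) (piDist c n) < 1/4}) with h | h
      · rw [h] at hmem; exact absurd hmem h0notin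
      · exact h
    calc 1 ≤ sInf {t : ℕ | tvDist (KerPow c n t x) (piDist c n) < 1/4} := hge1
      _ ≤ mixTime c n (1/4) :=
          Finset.le_sup (f := fun x : Fin (n+1) =>
            sInf {t : ℕ | tvDist (KerPow c n t x) (piDist c n) < 1/4}) (Finset.mem_univ x)
  by_cases hcase : (n:ℝ) ≤ N₀
  · -- small n
    have h1 : ψ * n ≤ Real.log 8 := by
      have h2 : ψ ≤ Real.log 8 / (N₀ + 1) := min_le_right _ _
      have h3 : ψ * n ≤ (Real.log 8 / (N₀ + 1)) * N₀ := by
        apply mul_le_mul h2 hcase (le_of_lt hn0) (by positivity)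
      have h4 : (Real.log 8 / (N₀ + 1)) * N₀ ≤ Real.log 8 := by
        rw [div_mul_eq_mul_div, div_le_iff₀ (by positivity)]
        nlinarith
      linarith
    have h5 : Real.exp (ψ * n) ≤ 8 := by
      calc Real.exp (ψ * n) ≤ Real.exp (Real.log 8) := Real.exp_le_exp.mpr h1
        _ = 8 := Real.exp_log (by norm_num)
    have h6 : (1:ℝ) ≤ (mixTime c n (1/4) : ℝ) := by exact_mod_cast hmix1
    rw [ge_iff_le, div_le_iff₀ (by norm_num : (0:ℝ) < 8)]
    nlinarith
  · -- large n
    push_neg at hcase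
    have hβn : 2 * Real.log 16 ≤ β * n := by
      rw [hN₀_def] at hcase
      rw [div_lt_iff₀ hβ0] at hcase
      nlinarith
    set η : ℝ := 2 * Real.exp (-(n:ℝ) * mm^2/8) with hη_def
    have hη0 : 0 < η := by positivity
    have hexpβ : Real.exp (β * n) ≥ 16 := by
      have : Real.log 16 ≤ β * n := by linarith
      calc (16:ℝ) = Real.exp (Real.log 16) := (Real.exp_log (by norm_num)).symm
        _ ≤ Real.exp (β * n) := Real.exp_le_exp.mpr this
    have hη_eq : η = 2 / Real.exp (β * n) := by
      have harg : -(n:ℝ) * mm^2/8 = -(β * n) := by rw [hβ_def]; ring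
      rw [hη_def, harg, Real.exp_neg, div_eq_mul_inv]
    have hη18 : η ≤ 1/8 := by
      rw [hη_eq, div_le_iff₀ (by positivity)]
      nlinarith
    -- finsets
    set Ifin : Finset (Fin (n+1)) :=
      Finset.univ.filter (fun j => a ≤ ((j:ℕ):ℝ)/(n:ℝ) ∧ ((j:ℕ):ℝ)/(n:ℝ) ≤ 1) with hIfin
    set Jfin : Finset (Fin (n+1)) :=
      Finset.univ.filter (fun j => b₁ ≤ ((j:ℕ):ℝ)/(n:ℝ) ∧ ((j:ℕ):ℝ)/(n:ℝ) ≤ b₂) with hJfin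
    have hdisj : ∀ j : Fin (n+1), j ∈ Ifin → j ∈ Jfin → False := by
      intro j hj1 hj2
      have h1 := (Finset.mem_filter.mp hj1).2
      have h2 := (Finset.mem_filter.mp hj2).2
      linarith [h1.1, h2.2]
    -- concentration from I to J
    have hconcIJ : ∀ k : Fin (n+1), k ∈ Ifin → 1 - η ≤ ∑ j ∈ Jfin, Ker c n k j := by
      intro k hk
      have hkm := (Finset.mem_filter.mp hk).2
      rw [hJfin]
      apply kernel_conc c n hn mm hmm0 hmm1
      intro j hj
      have hfk := hI (((k:ℕ):ℝ)/(n:ℝ)) hkm.1 hkm.2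
      have heq : _root_.sigmoid (c * ((k:ℕ):ℝ)/(n:ℝ)) = _root_.sigmoid (c * (((k:ℕ):ℝ)/(n:ℝ))) := by
        rw [mul_div_assoc]
      rw [abs_lt] at hj
      constructor
      · have := hfk.1
        rw [← heq] at this
        linarith [hj.1]
      · have := hfk.2
        rw [← heq] at this
        linarith [hj.2]
    have hconcJI : ∀ k : Fin (n+1), k ∈ Jfin → 1 - η ≤ ∑ j ∈ Ifin, Ker c n k j := by
      intro k hk
      have hkm := (Finset.mem_filter.mp hk).2
      rw [hIfin]
      apply kernel_conc c n hn mm hmm0 hmm1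
      intro j hj
      have hfk := hJ (((k:ℕ):ℝ)/(n:ℝ)) hkm.1 hkm.2
      have heq : _root_.sigmoid (c * ((k:ℕ):ℝ)/(n:ℝ)) = _root_.sigmoid (c * (((k:ℕ):ℝ)/(n:ℝ))) := by
        rw [mul_div_assoc]
      rw [abs_lt] at hj
      constructor
      · have := hfk.1
        rw [← heq] at this
        linarith [hj.1]
      · have := hfk.2
        rw [← heq] at this
        linarith [hj.2]
    set Sfin : ℕ → Finset (Fin (n+1)) := fun t => if Even t then Ifin else Jfin with hSfin
    set xhat : Fin (n+1) := Fin.last n with hxhat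
    -- induction: mass stays
    have hstay : ∀ t : ℕ, 1 - t * η ≤ ∑ j ∈ Sfin t, KerPow c n t xhat j := by
      intro t
      induction t with
      | zero =>
        have hx : xhat ∈ Ifin := by
          have hval : ((xhat:ℕ):ℝ) = n := by rw [hxhat]; simp
          rw [hIfin, Finset.mem_filter]
          rw [hval, div_self (ne_of_gt hn0)]
          exact ⟨Finset.mem_univ _, le_of_lt ha1, le_refl 1⟩
        have hS0 : Sfin 0 = Ifin := by rw [hSfin]; simp
        rw [hS0]
        have hbase : ∑ j ∈ Ifin, KerPow c n 0 xhat j = 1 := by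
          have hker : ∀ j, KerPow c n 0 xhat j = if xhat = j then (1:ℝ) else 0 := fun j => rfl
          calc ∑ j ∈ Ifin, KerPow c n 0 xhat j
              = ∑ j ∈ Ifin, (if xhat = j then (1:ℝ) else 0) :=
                Finset.sum_congr rfl (fun j _ => hker j)
            _ = if xhat ∈ Ifin then (1:ℝ) else 0 := Finset.sum_ite_eq Ifin xhat (fun _ => (1:ℝ))
            _ = 1 := by rw [if_pos hx]
        rw [hbase]
        simp
      | succ t ih =>
        have hcard : ∀ k ∈ Sfin t, 1 - η ≤ ∑ j ∈ Sfin (t+1), Ker c n k j := by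
          intro k hk
          by_cases he : Even t
          · have h1 : Sfin t = Ifin := by rw [hSfin]; simp [he]
            have h2 : Sfin (t+1) = Jfin := by
              rw [hSfin]; simp [Nat.even_add_one, he]
            rw [h2]; exact hconcIJ k (h1 ▸ hk)
          · have h1 : Sfin t = Jfin := by rw [hSfin]; simp [he]
            have h2 : Sfin (t+1) = Ifin := by
              rw [hSfin]; simp [Nat.even_add_one, he]
            rw [h2]; exact hconcJI k (h1 ▸ hk)
        have hswap : ∑ j ∈ Sfin (t+1), KerPow c n (t+1) xhat j
            = ∑ k, KerPow c n t xhat k * (∑ j ∈ Sfin (t+1), Ker c n k j) := by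
          calc ∑ j ∈ Sfin (t+1), KerPow c n (t+1) xhat j
              = ∑ j ∈ Sfin (t+1), ∑ k, KerPow c n t xhat k * Ker c n k j := rfl
            _ = ∑ k, ∑ j ∈ Sfin (t+1), KerPow c n t xhat k * Ker c n k j := Finset.sum_comm
            _ = ∑ k, KerPow c n t xhat k * (∑ j ∈ Sfin (t+1), Ker c n k j) := by
                apply Finset.sum_congr rfl; intro k _; rw [Finset.mul_sum]
        rw [hswap]
        have hdrop : ∑ k ∈ Sfin t, KerPow c n t xhat k * (∑ j ∈ Sfin (t+1), Ker c n k j)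
            ≤ ∑ k, KerPow c n t xhat k * (∑ j ∈ Sfin (t+1), Ker c n k j) := by
          apply Finset.sum_le_sum_of_subset_of_nonneg (Finset.subset_univ _)
          intro k _ _
          apply mul_nonneg (KerPow_nonneg c n t xhat k)
          exact Finset.sum_nonneg (fun j _ => Ker_nonneg c n k j)
        have hterm : ∑ k ∈ Sfin t, KerPow c n t xhat k * (1 - η)
            ≤ ∑ k ∈ Sfin t, KerPow c n t xhat k * (∑ j ∈ Sfin (t+1), Ker c n k j) := by
          apply Finset.sum_le_sum
          intro k hk
          exact mul_le_mul_of_nonneg_left (hcard k hk) (KerPow_nonneg c n t xhat k)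
        have hmass_le : ∑ k ∈ Sfin t, KerPow c n t xhat k ≤ 1 := by
          rw [← KerPow_row_sum c n t xhat]
          apply Finset.sum_le_sum_of_subset_of_nonneg (Finset.subset_univ _)
          intro k _ _; exact KerPow_nonneg c n t xhat k
        have hmass_ge : 0 ≤ ∑ k ∈ Sfin t, KerPow c n t xhat k :=
          Finset.sum_nonneg (fun k _ => KerPow_nonneg c n t xhat k)
        have hfac : ∑ k ∈ Sfin t, KerPow c n t xhat k * (1 - η)
            = (∑ k ∈ Sfin t, KerPow c n t xhat k) * (1 - η) := by
          rw [Finset.sum_mul]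
        by_cases hsign : 1 - (t+1 : ℕ) * η ≤ 0
        · have : 0 ≤ ∑ k, KerPow c n t xhat k * (∑ j ∈ Sfin (t+1), Ker c n k j) := by
            apply Finset.sum_nonneg
            intro k _
            apply mul_nonneg (KerPow_nonneg c n t xhat k)
            exact Finset.sum_nonneg (fun j _ => Ker_nonneg c n k j)
          linarith
        · push_neg at hsign
          have hη1 : η ≤ 1 := by
            by_contra hgt
            push_neg at hgt
            have : ((t:ℝ)+1) * η ≥ 1 := by
              have ht0 : (0:ℝ) ≤ (t:ℝ) := Nat.cast_nonneg t
              have : (1:ℝ) ≤ (t:ℝ)+1 := by linarith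
              nlinarith
            push_cast at hsign
            linarith
          have h8 : (∑ k ∈ Sfin t, KerPow c n t xhat k) * (1 - η) ≥ (1 - t*η) * (1 - η) := by
            apply mul_le_mul_of_nonneg_right ih (by linarith)
          have h9 : (1 - t*η) * (1 - η) ≥ 1 - (t+1:ℕ) * η := by
            push_cast
            nlinarith [sq_nonneg η, Nat.cast_nonneg (α := ℝ) t]
          push_cast at hsign h9 ⊢
          linarith [hterm, hdrop, hfac ▸ h8]
    -- pi bounds
    have hπI_nonneg : 0 ≤ ∑ j ∈ Ifin, piDist c n j :=
      Finset.sum_nonneg (fun j _ => piDist_nonneg c n j)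
    have hπJ_nonneg : 0 ≤ ∑ j ∈ Jfin, piDist c n j :=
      Finset.sum_nonneg (fun j _ => piDist_nonneg c n j)
    have hsum_le : ∑ j ∈ Ifin, piDist c n j + ∑ j ∈ Jfin, piDist c n j ≤ 1 := by
      have hd : Disjoint Ifin Jfin := by
        rw [Finset.disjoint_left]
        intro j hj1 hj2
        exact (hdisj j hj1 hj2).elim
      rw [← Finset.sum_union hd, ← piDist_sum c n]
      apply Finset.sum_le_sum_of_subset_of_nonneg (Finset.subset_univ _)
      intro j _ _; exact piDist_nonneg c n j
    have hstat_set : ∀ (A B : Finset (Fin (n+1))),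
        (∀ k ∈ A, 1 - η ≤ ∑ j ∈ B, Ker c n k j) →
        (1 - η) * ∑ j ∈ A, piDist c n j ≤ ∑ j ∈ B, piDist c n j := by
      intro A B hAB
      have h1 : ∑ j ∈ B, piDist c n j = ∑ i, piDist c n i * ∑ j ∈ B, Ker c n i j := by
        calc ∑ j ∈ B, piDist c n j = ∑ j ∈ B, ∑ i, piDist c n i * Ker c n i j :=
              Finset.sum_congr rfl (fun j _ => (piDist_stationary c n j).symm)
          _ = ∑ i, ∑ j ∈ B, piDist c n i * Ker c n i j := Finset.sum_comm
          _ = ∑ i, piDist c n i * ∑ j ∈ B, Ker c n i j := by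
              apply Finset.sum_congr rfl; intro i _; rw [Finset.mul_sum]
      rw [h1]
      have h2 : ∑ i ∈ A, piDist c n i * ∑ j ∈ B, Ker c n i j
          ≤ ∑ i, piDist c n i * ∑ j ∈ B, Ker c n i j := by
        apply Finset.sum_le_sum_of_subset_of_nonneg (Finset.subset_univ _)
        intro i _ _
        exact mul_nonneg (piDist_nonneg c n i)
          (Finset.sum_nonneg (fun j _ => Ker_nonneg c n i j))
      have h3 : ∑ i ∈ A, piDist c n i * (1 - η)
          ≤ ∑ i ∈ A, piDist c n i * ∑ j ∈ B, Ker c n i j := by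
        apply Finset.sum_le_sum
        intro i hi
        exact mul_le_mul_of_nonneg_left (hAB i hi) (piDist_nonneg c n i)
      have h4 : ∑ i ∈ A, piDist c n i * (1 - η) = (1 - η) * ∑ i ∈ A, piDist c n i := by
        rw [← Finset.sum_mul]; ring
      linarith
    have hπI_le : ∑ j ∈ Ifin, piDist c n j ≤ 8/15 := by
      have h1 := hstat_set Ifin Jfin hconcIJ
      nlinarith [mul_le_mul_of_nonneg_right hη18 hπI_nonneg]
    have hπJ_le : ∑ j ∈ Jfin, piDist c n j ≤ 8/15 := by
      have h1 := hstat_set Jfin Ifin hconcJI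
      nlinarith [mul_le_mul_of_nonneg_right hη18 hπJ_nonneg]
    -- every element of the mixing set is large
    have hlarge : ∀ t : ℕ, tvDist (KerPow c n t xhat) (piDist c n) < 1/4 →
        13/(60*η) < (t:ℝ) := by
      intro t ht
      have htv := le_tvDist (KerPow c n t xhat) (piDist c n) (Sfin t)
      have hstay_t := hstay t
      have hπ_le : ∑ j ∈ Sfin t, piDist c n j ≤ 8/15 := by
        by_cases he : Even t
        · rw [show Sfin t = Ifin by rw [hSfin]; simp [he]]; exact hπI_le
        · rw [show Sfin t = Jfin by rw [hSfin]; simp [he]]; exact hπJ_le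
      have h5 : (1 - t*η) - 8/15 ≤ ∑ j ∈ Sfin t, KerPow c n t xhat j
          - ∑ j ∈ Sfin t, piDist c n j := by linarith
      have h6 : ∑ j ∈ Sfin t, KerPow c n t xhat j - ∑ j ∈ Sfin t, piDist c n j
          ≤ |∑ j ∈ Sfin t, KerPow c n t xhat j - ∑ j ∈ Sfin t, piDist c n j| :=
        le_abs_self _
      have h7 : (1:ℝ) - t*η - 8/15 < 1/4 := by linarith
      have h8 : 13/60 < (t:ℝ) * η := by linarith
      rw [div_lt_iff₀ (by positivity : (0:ℝ) < 60*η)]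
      nlinarith
    have hne : {t : ℕ | tvDist (KerPow c n t xhat) (piDist c n) < 1/4}.Nonempty :=
      mixing_exists c n xhat (1/4) (by norm_num)
    have hsinf_mem := Nat.sInf_mem hne
    have hsinf_large : 13/(60*η)
        < ((sInf {t : ℕ | tvDist (KerPow c n t xhat) (piDist c n) < 1/4} : ℕ) : ℝ) :=
      hlarge _ hsinf_mem
    have hmixlarge : (13:ℝ)/(60*η) < (mixTime c n (1/4) : ℝ) := by
      have h5 : sInf {t : ℕ | tvDist (KerPow c n t xhat) (piDist c n) < 1/4}
          ≤ mixTime c n (1/4) :=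
        Finset.le_sup (f := fun x : Fin (n+1) =>
          sInf {t : ℕ | tvDist (KerPow c n t x) (piDist c n) < 1/4}) (Finset.mem_univ xhat)
      have h6 : ((sInf {t : ℕ | tvDist (KerPow c n t xhat) (piDist c n) < 1/4} : ℕ) : ℝ)
          ≤ (mixTime c n (1/4) : ℝ) := by exact_mod_cast h5
      linarith
    -- final arithmetic
    have hψβ : ψ ≤ β/2 := min_le_left _ _
    have hexp1 : Real.exp (ψ * n) ≤ Real.exp (β/2 * n) :=
      Real.exp_le_exp.mpr (mul_le_mul_of_nonneg_right hψβ (le_of_lt hn0))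
    have hsq : Real.exp (β * n) = Real.exp (β/2 * n) * Real.exp (β/2 * n) := by
      rw [← Real.exp_add]; congr 1; ring
    have h4e : 4 ≤ Real.exp (β/2 * n) := by
      nlinarith [Real.exp_pos (β/2 * n), hexpβ, hsq]
    have hchain : Real.exp (ψ * n) ≤ Real.exp (β * n)/4 := by
      rw [hsq]
      nlinarith [Real.exp_pos (β/2 * n)]
    have hηval : (13:ℝ)/(60*η) = 13 * Real.exp (β * n)/120 := by
      rw [hη_eq]
      have := Real.exp_pos (β * n)
      field_simp
      ring
    rw [ge_iff_le, div_le_iff₀ (by norm_num : (0:ℝ) < 8)]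
    have hEpos := Real.exp_pos (β * n)
    nlinarith [hmixlarge, hηval, hchain]
end

section
/- Suppose c = c_⋆, where c_⋆ = -1 - x_⋆ - e^{x_⋆} and x_⋆ is the unique positive solution of x e^x/(1+e^x) = 1. Then: (a) for every x ∈ [0,1] and every ε > 0, τ̂(ε, x, c) is finite; and (b) for every x ∈ [0,1] with x ≠ x_c^*, there exist δ > 0 and ε₀ > 0 such that ε · τ̂(ε, x, c) ≥ δ for all ε ∈ (0, ε₀), i.e., ε τ̂(ε, x, c) is bounded away from 0 as ε → 0. -/
open Real MeasureTheory

namespace DynCrit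

lemma aux_pos (x : ℝ) : 0 < 1 + Real.exp x := by positivity

lemma sigmoid_pos (x : ℝ) : 0 < _root_.sigmoid x := div_pos (Real.exp_pos x) (aux_pos x)

lemma sigmoid_lt_one (x : ℝ) : _root_.sigmoid x < 1 := by
  rw [_root_.sigmoid, div_lt_one (aux_pos x)]; linarith [Real.exp_pos x]

lemma sigmoid_strictMono : StrictMono _root_.sigmoid := by
  intro a b hab
  rw [_root_.sigmoid, _root_.sigmoid, div_lt_div_iff₀ (aux_pos a) (aux_pos b)]
  have h := Real.exp_lt_exp.2 hab
  nlinarith [Real.exp_pos a, Real.exp_pos b]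

lemma continuous_mc (c : ℝ) : Continuous (mc c) := by
  unfold mc _root_.sigmoid
  fun_prop (disch := intros; positivity)

noncomputable def sder (u : ℝ) : ℝ := Real.exp u / (1 + Real.exp u)^2

lemma hasDerivAt_sigmoid (x : ℝ) : HasDerivAt _root_.sigmoid (sder x) x := by
  have h := (Real.hasDerivAt_exp x).div ((hasDerivAt_const x (1:ℝ)).add (Real.hasDerivAt_exp x))
    (aux_pos x).ne'
  refine h.congr_deriv ?_
  unfold sder; simp only [Pi.add_apply]
  have h1 := (aux_pos x).ne'
  field_simp
  ring

lemma hasDerivAt_mc (c x : ℝ) : HasDerivAt (mc c) (c * sder (c*x)) x := by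
  have h0 : HasDerivAt (fun y : ℝ => c * y) c x := by
    simpa using (hasDerivAt_id x).const_mul c
  have h := (hasDerivAt_sigmoid (c*x)).comp x h0
  exact h.congr_deriv (mul_comm _ _)

lemma mc_strictAnti {c : ℝ} (hc : c < 0) : StrictAnti (mc c) := by
  intro a b hab
  exact sigmoid_strictMono (by nlinarith : c*b < c*a)

lemma sigmoid_neg_eq (xs : ℝ) : _root_.sigmoid (-xs) = 1/(1 + Real.exp xs) := by
  unfold _root_.sigmoid
  rw [Real.exp_neg]
  have h := Real.exp_pos xs
  rw [div_eq_div_iff (by positivity) (by positivity)]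
  field_simp
  ring

section Crit

variable {xs c xc : ℝ}

lemma hc2_of (h2 : xs * Real.exp xs = 1 + Real.exp xs) (hc : c = -1 - xs - Real.exp xs) :
    c = -xs * (1 + Real.exp xs) := by linear_combination hc + h2

lemma hcneg_of (h1 : 0 < xs) (hc2 : c = -xs * (1 + Real.exp xs)) : c < 0 := by
  rw [hc2]; nlinarith [Real.exp_pos xs]

lemma cxc_eq (hcneg : c < 0) (hc2 : c = -xs * (1 + Real.exp xs))
    (hfix : _root_.sigmoid (c * xc) = xc) : c * xc = -xs := by
  have hsm : StrictMono (fun u : ℝ => u - c * _root_.sigmoid u) := by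
    intro a b hab
    have hs := sigmoid_strictMono hab
    simp only
    nlinarith
  apply hsm.injective
  simp only
  rw [hfix, sigmoid_neg_eq, hc2]
  have h := Real.exp_pos xs
  field_simp; ring

lemma xc_mem (hcx : c * xc = -xs) (hfix : _root_.sigmoid (c * xc) = xc) :
    0 < xc ∧ xc < 1 := by
  constructor
  · rw [← hfix]; exact sigmoid_pos _
  · rw [← hfix]; exact sigmoid_lt_one _

/-- The core tangency inequality: `h(v) = e^v + e^{-v} + 2 + v² + cv > 0` for `v ≠ xs`. -/
lemma core_h (h2 : xs * Real.exp xs = 1 + Real.exp xs)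
    (hc2 : c = -xs * (1 + Real.exp xs)) :
    ∀ v : ℝ, v ≠ xs → 0 < Real.exp v + Real.exp (-v) + 2 + v^2 + c*v := by
  have hEpos : (0:ℝ) < Real.exp xs := Real.exp_pos xs
  set h : ℝ → ℝ := fun v => Real.exp v + Real.exp (-v) + 2 + v^2 + c*v with hh
  set h' : ℝ → ℝ := fun v => Real.exp v - Real.exp (-v) + 2*v + c with hh'
  have hd : ∀ v, HasDerivAt h (h' v) v := by
    intro v
    have e2 : HasDerivAt (fun v : ℝ => Real.exp (-v)) (-Real.exp (-v)) v := by
      simpa [Function.comp_def] using (Real.hasDerivAt_exp (-v)).comp v ((hasDerivAt_id v).neg)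
    have e3 : HasDerivAt (fun v : ℝ => v^2) (2*v) v := by
      simpa using (hasDerivAt_pow 2 v)
    have e4 : HasDerivAt (fun v : ℝ => c*v) c v := by
      simpa using (hasDerivAt_id v).const_mul c
    have h5 := (((Real.hasDerivAt_exp v).add e2).add ((hasDerivAt_const v (2:ℝ)).add e3)).add e4
    have hfun : (fun x : ℝ => Real.exp x + Real.exp (-x) + (2 + x^2) + c*x) = h := by
      funext x; simp only [hh]; ring
    simp only [Pi.add_def] at h5; rw [hfun] at h5
    refine h5.congr_deriv ?_
    simp only [hh']; ring
  have hcont : Continuous h := by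
    have : Continuous h' := by fun_prop
    fun_prop
  have h'mono : StrictMono h' := by
    intro a b hab
    have g1 := Real.exp_lt_exp.2 hab
    have g2 := Real.exp_lt_exp.2 (neg_lt_neg hab)
    simp only [hh']
    nlinarith
  have h'xs : h' xs = 0 := by
    simp only [hh']
    rw [Real.exp_neg, hc2]
    field_simp
    linear_combination (1 - Real.exp xs) * h2
  have hxs : h xs = 0 := by
    simp only [hh]
    rw [Real.exp_neg, hc2]
    field_simp
    linear_combination (-(xs * Real.exp xs + 1 + Real.exp xs)) * h2
  intro v hv
  rcases lt_or_gt_of_ne hv with hlt | hgt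
  · have hanti : StrictAntiOn h (Set.Iic xs) := by
      apply strictAntiOn_of_deriv_neg (convex_Iic xs) hcont.continuousOn
      intro z hz
      rw [interior_Iic] at hz
      rw [(hd z).deriv]
      have := h'mono hz
      rw [h'xs] at this
      linarith
    have := hanti (Set.mem_Iic.mpr hlt.le) (Set.mem_Iic.mpr le_rfl) hlt
    rw [hxs] at this
    exact this
  · have hmono : StrictMonoOn h (Set.Ici xs) := by
      apply strictMonoOn_of_deriv_pos (convex_Ici xs) hcont.continuousOn
      intro z hz
      rw [interior_Ici] at hz
      rw [(hd z).deriv]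
      have := h'mono hz
      rw [h'xs] at this
      linarith
    have := hmono (Set.mem_Ici.mpr le_rfl) (Set.mem_Ici.mpr hgt.le) hgt
    rw [hxs] at this
    exact this

noncomputable def psi (c x : ℝ) : ℝ := Real.log x - Real.log (1 - x) - c * mc c x

lemma hasDerivAt_psi (c : ℝ) {x : ℝ} (hx : x ∈ Set.Ioo (0:ℝ) 1) :
    HasDerivAt (psi c) (x⁻¹ + (1-x)⁻¹ - c * (c * sder (c*x))) x := by
  obtain ⟨hx0, hx1⟩ := hx
  have l1 : HasDerivAt Real.log x⁻¹ x := Real.hasDerivAt_log (ne_of_gt hx0)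
  have i1 : HasDerivAt (fun x:ℝ => 1 - x) (-1) x := by
    simpa [Pi.sub_def] using (hasDerivAt_const x (1:ℝ)).sub (hasDerivAt_id x)
  have l2 : HasDerivAt (fun x:ℝ => Real.log (1-x)) ((1-x)⁻¹ * (-1)) x := by
    have := (Real.hasDerivAt_log (by linarith : (1:ℝ)-x ≠ 0)).comp x i1
    simpa [Function.comp_def] using this
  have l3 : HasDerivAt (fun x => c * mc c x) (c * (c * sder (c*x))) x :=
    (hasDerivAt_mc c x).const_mul c
  have := (l1.sub l2).sub l3; simp only [Pi.sub_def] at this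
  refine this.congr_deriv ?_
  ring

lemma psi_deriv_pos (h2 : xs * Real.exp xs = 1 + Real.exp xs)
    (hc2 : c = -xs * (1 + Real.exp xs)) (hcneg : c < 0) (hcx : c * xc = -xs)
    {x : ℝ} (hx : x ∈ Set.Ioo (0:ℝ) 1) (hne : x ≠ xc) :
    0 < x⁻¹ + (1-x)⁻¹ - c * (c * sder (c*x)) := by
  obtain ⟨hx0, hx1⟩ := hx
  have hvne : -(c*x) ≠ xs := by
    intro hcon
    apply hne
    have : c * x = c * xc := by rw [hcx]; linarith
    exact mul_left_cancel₀ (ne_of_lt hcneg) this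
  have hv := core_h h2 hc2 (-(c*x)) hvne
  rw [neg_neg] at hv
  have hE : 0 < Real.exp (c*x) := Real.exp_pos _
  have hprod : Real.exp (c*x) * Real.exp (-(c*x)) = 1 := by
    rw [← Real.exp_add]; simp
  have hxx : 0 < x*(1-x) := by nlinarith
  have key : c * (c * sder (c*x)) * (x*(1-x)) < 1 := by
    unfold sder
    rw [show c * (c * (Real.exp (c*x)/(1+Real.exp (c*x))^2)) * (x*(1-x))
        = (c*c*Real.exp (c*x)*(x*(1-x)))/(1+Real.exp (c*x))^2 from by ring,
      div_lt_one (by positivity)]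
    nlinarith [mul_pos hE hv, hprod]
  have h3 : c * (c * sder (c*x)) < 1/(x*(1-x)) := by
    rw [lt_div_iff₀ hxx]
    exact key
  have h4 : x⁻¹ + (1-x)⁻¹ = 1/(x*(1-x)) := by
    have hx0' : x ≠ 0 := ne_of_gt hx0
    have hx1' : (1:ℝ) - x ≠ 0 := by linarith
    rw [eq_div_iff (ne_of_gt hxx)]
    field_simp; ring
  linarith

lemma psi_xc_eq_zero (hfix : _root_.sigmoid (c * xc) = xc) (hxc0 : 0 < xc) (hxc1 : xc < 1) :
    psi c xc = 0 := by
  have h1 : xc = Real.exp (c*xc) * (1 - xc) := by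
    have hp := aux_pos (c*xc)
    unfold _root_.sigmoid at hfix
    field_simp at hfix
    linarith
  have hlog : Real.log xc = c*xc + Real.log (1-xc) := by
    conv_lhs => rw [h1]
    rw [Real.log_mul (Real.exp_ne_zero _) (by linarith : (1:ℝ)-xc ≠ 0), Real.log_exp]
  unfold psi
  rw [show mc c xc = xc from hfix, hlog]
  ring

lemma psi_pos_of_gt (h2 : xs * Real.exp xs = 1 + Real.exp xs)
    (hc2 : c = -xs * (1 + Real.exp xs)) (hcneg : c < 0) (hcx : c * xc = -xs)
    (hfix : _root_.sigmoid (c * xc) = xc) (hxc0 : 0 < xc) (hxc1 : xc < 1)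
    {y : ℝ} (hy : y ∈ Set.Ioo xc 1) : 0 < psi c y := by
  have hmono : StrictMonoOn (psi c) (Set.Ico xc 1) := by
    apply strictMonoOn_of_deriv_pos (convex_Ico _ _)
    · intro z hz
      have hz' : z ∈ Set.Ioo (0:ℝ) 1 := ⟨lt_of_lt_of_le hxc0 hz.1, hz.2⟩
      exact (hasDerivAt_psi c hz').continuousAt.continuousWithinAt
    · intro z hz
      rw [interior_Ico] at hz
      have hz' : z ∈ Set.Ioo (0:ℝ) 1 := ⟨lt_trans hxc0 hz.1, hz.2⟩
      rw [(hasDerivAt_psi c hz').deriv]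
      exact psi_deriv_pos h2 hc2 hcneg hcx hz' (ne_of_gt hz.1)
  have := hmono (Set.mem_Ico.mpr ⟨le_rfl, hxc1⟩) (Set.mem_Ico.mpr ⟨hy.1.le, hy.2⟩) hy.1
  rwa [psi_xc_eq_zero hfix hxc0 hxc1] at this

lemma psi_neg_of_lt (h2 : xs * Real.exp xs = 1 + Real.exp xs)
    (hc2 : c = -xs * (1 + Real.exp xs)) (hcneg : c < 0) (hcx : c * xc = -xs)
    (hfix : _root_.sigmoid (c * xc) = xc) (hxc0 : 0 < xc) (hxc1 : xc < 1)
    {y : ℝ} (hy : y ∈ Set.Ioo (0:ℝ) xc) : psi c y < 0 := by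
  have hmono : StrictMonoOn (psi c) (Set.Ioc 0 xc) := by
    apply strictMonoOn_of_deriv_pos (convex_Ioc _ _)
    · intro z hz
      have hz' : z ∈ Set.Ioo (0:ℝ) 1 := ⟨hz.1, lt_of_le_of_lt hz.2 hxc1⟩
      exact (hasDerivAt_psi c hz').continuousAt.continuousWithinAt
    · intro z hz
      rw [interior_Ioc] at hz
      have hz' : z ∈ Set.Ioo (0:ℝ) 1 := ⟨hz.1, lt_trans hz.2 hxc1⟩
      rw [(hasDerivAt_psi c hz').deriv]
      exact psi_deriv_pos h2 hc2 hcneg hcx hz' (ne_of_lt hz.2)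
  have := hmono (Set.mem_Ioc.mpr ⟨hy.1, hy.2.le⟩) (Set.mem_Ioc.mpr ⟨hxc0, le_rfl⟩) hy.2
  rwa [psi_xc_eq_zero hfix hxc0 hxc1] at this

lemma sigmoid_logit {y : ℝ} (h0 : 0 < y) (h1 : y < 1) :
    _root_.sigmoid (Real.log y - Real.log (1-y)) = y := by
  unfold _root_.sigmoid
  rw [Real.exp_sub, Real.exp_log h0, Real.exp_log (by linarith : (0:ℝ) < 1 - y)]
  have hy1 : (1:ℝ) - y ≠ 0 := by linarith
  have hden : 1 + y/(1-y) = 1/(1-y) := by field_simp; ring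
  rw [hden]
  rw [div_div_eq_mul_div, div_one, div_mul_cancel₀ _ hy1]

lemma step_above (h2 : xs * Real.exp xs = 1 + Real.exp xs)
    (hc2 : c = -xs * (1 + Real.exp xs)) (hcneg : c < 0) (hcx : c * xc = -xs)
    (hfix : _root_.sigmoid (c * xc) = xc) (hxc0 : 0 < xc) (hxc1 : xc < 1)
    {y : ℝ} (hy : y ∈ Set.Ioo xc 1) : mc c (mc c y) ∈ Set.Ioo xc y := by
  constructor
  · have hstep1 : mc c y < xc := by
      have := mc_strictAnti hcneg hy.1
      rwa [show mc c xc = xc from hfix] at this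
    have := mc_strictAnti hcneg hstep1
    rwa [show mc c xc = xc from hfix] at this
  · have hψ := psi_pos_of_gt h2 hc2 hcneg hcx hfix hxc0 hxc1 hy
    unfold psi at hψ
    have hlog : c * mc c y < Real.log y - Real.log (1-y) := by linarith
    have := sigmoid_strictMono hlog
    rwa [sigmoid_logit (lt_trans hxc0 hy.1) hy.2] at this

lemma step_below (h2 : xs * Real.exp xs = 1 + Real.exp xs)
    (hc2 : c = -xs * (1 + Real.exp xs)) (hcneg : c < 0) (hcx : c * xc = -xs)
    (hfix : _root_.sigmoid (c * xc) = xc) (hxc0 : 0 < xc) (hxc1 : xc < 1)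
    {y : ℝ} (hy : y ∈ Set.Ioo (0:ℝ) xc) : mc c (mc c y) ∈ Set.Ioo y xc := by
  constructor
  · have hψ := psi_neg_of_lt h2 hc2 hcneg hcx hfix hxc0 hxc1 hy
    unfold psi at hψ
    have hlog : Real.log y - Real.log (1-y) < c * mc c y := by linarith
    have := sigmoid_strictMono hlog
    rwa [sigmoid_logit hy.1 (lt_trans hy.2 hxc1)] at this
  · have hstep1 : xc < mc c y := by
      have := mc_strictAnti hcneg hy.2
      rwa [show mc c xc = xc from hfix] at this
    have := mc_strictAnti hcneg hstep1
    rwa [show mc c xc = xc from hfix] at this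


lemma g_iterate_eq (c : ℝ) (k : ℕ) (z : ℝ) :
    (fun w => mc c (mc c w))^[k] z = (mc c)^[2*k] z := by
  rw [Function.iterate_mul]
  have : (mc c)^[2] = fun w => mc c (mc c w) := by
    funext w
    simp [Function.iterate_succ, Function.comp]
  rw [this]

lemma tendsto_g (h2 : xs * Real.exp xs = 1 + Real.exp xs)
    (hc2 : c = -xs * (1 + Real.exp xs)) (hcneg : c < 0) (hcx : c * xc = -xs)
    (hfix : _root_.sigmoid (c * xc) = xc) (hxc0 : 0 < xc) (hxc1 : xc < 1)
    {y : ℝ} (hy : y ∈ Set.Ioo (0:ℝ) 1) :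
    Filter.Tendsto (fun k => (fun w => mc c (mc c w))^[k] y) Filter.atTop (nhds xc) := by
  set g : ℝ → ℝ := fun w => mc c (mc c w) with hg
  have hgc : Continuous g := (continuous_mc c).comp (continuous_mc c)
  have hgfix : g xc = xc := by
    simp only [hg]
    rw [show mc c xc = xc from hfix, show mc c xc = xc from hfix]
  rcases lt_trichotomy y xc with hlt | heq | hgt
  · -- y < xc : increasing orbit
    have hinv : ∀ k, g^[k] y ∈ Set.Ico y xc := by
      intro k
      induction k with
      | zero => simp only [Function.iterate_zero_apply]; exact ⟨le_rfl, hlt⟩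
      | succ n ih =>
        rw [Function.iterate_succ_apply']
        have hstep := step_below h2 hc2 hcneg hcx hfix hxc0 hxc1
          (show g^[n] y ∈ Set.Ioo (0:ℝ) xc from ⟨lt_of_lt_of_le hy.1 ih.1, ih.2⟩)
        exact ⟨le_trans ih.1 hstep.1.le, hstep.2⟩
    have hmono : Monotone (fun k => g^[k] y) := by
      apply monotone_nat_of_le_succ
      intro n
      rw [Function.iterate_succ_apply']
      exact (step_below h2 hc2 hcneg hcx hfix hxc0 hxc1
        (show g^[n] y ∈ Set.Ioo (0:ℝ) xc from ⟨lt_of_lt_of_le hy.1 (hinv n).1, (hinv n).2⟩)).1.le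
    have hbdd : BddAbove (Set.range fun k => g^[k] y) := by
      refine ⟨xc, ?_⟩
      rintro _ ⟨k, rfl⟩
      exact (hinv k).2.le
    have hlim := tendsto_atTop_ciSup hmono hbdd
    set L := ⨆ k, g^[k] y with hL
    have hL1 : Filter.Tendsto (fun k => g^[k+1] y) Filter.atTop (nhds L) :=
      hlim.comp (Filter.tendsto_add_atTop_nat 1)
    have hL2 : Filter.Tendsto (fun k => g (g^[k] y)) Filter.atTop (nhds (g L)) :=
      (hgc.tendsto L).comp hlim
    have hiter : (fun k => g^[k+1] y) = fun k => g (g^[k] y) := by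
      funext k; exact Function.iterate_succ_apply' g k y
    rw [hiter] at hL1
    have hfixL : g L = L := tendsto_nhds_unique hL2 hL1
    have hLy : y ≤ L := le_ciSup hbdd 0
    have hLxc : L ≤ xc := ciSup_le fun k => (hinv k).2.le
    rcases eq_or_lt_of_le hLxc with heq2 | hlt2
    · rwa [heq2] at hlim
    · exfalso
      have := (step_below h2 hc2 hcneg hcx hfix hxc0 hxc1
        (show L ∈ Set.Ioo (0:ℝ) xc from ⟨lt_of_lt_of_le hy.1 hLy, hlt2⟩)).1
      rw [show mc c (mc c L) = g L from rfl, hfixL] at this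
      exact lt_irrefl L this
  · subst heq
    have : ∀ k, g^[k] y = y := fun k => Function.iterate_fixed hgfix k
    simpa [this] using tendsto_const_nhds
  · -- xc < y : decreasing orbit
    have hinv : ∀ k, g^[k] y ∈ Set.Ioc xc y := by
      intro k
      induction k with
      | zero => simp only [Function.iterate_zero_apply]; exact ⟨hgt, le_rfl⟩
      | succ n ih =>
        rw [Function.iterate_succ_apply']
        have hstep := step_above h2 hc2 hcneg hcx hfix hxc0 hxc1
          (show g^[n] y ∈ Set.Ioo xc 1 from ⟨ih.1, lt_of_le_of_lt ih.2 hy.2⟩)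
        exact ⟨hstep.1, le_trans hstep.2.le ih.2⟩
    have hmono : Antitone (fun k => g^[k] y) := by
      apply antitone_nat_of_succ_le
      intro n
      rw [Function.iterate_succ_apply']
      exact (step_above h2 hc2 hcneg hcx hfix hxc0 hxc1
        (show g^[n] y ∈ Set.Ioo xc 1 from ⟨(hinv n).1, lt_of_le_of_lt (hinv n).2 hy.2⟩)).2.le
    have hbdd : BddBelow (Set.range fun k => g^[k] y) := by
      refine ⟨xc, ?_⟩
      rintro _ ⟨k, rfl⟩
      exact (hinv k).1.le
    have hlim := tendsto_atTop_ciInf hmono hbdd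
    set L := ⨅ k, g^[k] y with hL
    have hL1 : Filter.Tendsto (fun k => g^[k+1] y) Filter.atTop (nhds L) :=
      hlim.comp (Filter.tendsto_add_atTop_nat 1)
    have hL2 : Filter.Tendsto (fun k => g (g^[k] y)) Filter.atTop (nhds (g L)) :=
      (hgc.tendsto L).comp hlim
    have hiter : (fun k => g^[k+1] y) = fun k => g (g^[k] y) := by
      funext k; exact Function.iterate_succ_apply' g k y
    rw [hiter] at hL1
    have hfixL : g L = L := tendsto_nhds_unique hL2 hL1
    have hLy : L ≤ y := ciInf_le hbdd 0
    have hLxc : xc ≤ L := le_ciInf fun k => (hinv k).1.le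
    rcases eq_or_lt_of_le hLxc with heq2 | hlt2
    · rwa [← heq2] at hlim
    · exfalso
      have := (step_above h2 hc2 hcneg hcx hfix hxc0 hxc1
        (show L ∈ Set.Ioo xc 1 from ⟨hlt2, lt_of_le_of_lt hLy hy.2⟩)).2
      rw [show mc c (mc c L) = g L from rfl, hfixL] at this
      exact lt_irrefl L this

lemma part_a (h2 : xs * Real.exp xs = 1 + Real.exp xs)
    (hc2 : c = -xs * (1 + Real.exp xs)) (hcneg : c < 0) (hcx : c * xc = -xs)
    (hfix : _root_.sigmoid (c * xc) = xc) (hxc0 : 0 < xc) (hxc1 : xc < 1)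
    (x : ℝ) {ε : ℝ} (hε : 0 < ε) :
    ∃ t : ℕ, ∀ t' : ℕ, t ≤ t' → |(mc c)^[t'] x - xc| < ε := by
  have hmem1 : mc c x ∈ Set.Ioo (0:ℝ) 1 := ⟨sigmoid_pos _, sigmoid_lt_one _⟩
  have hmem2 : mc c (mc c x) ∈ Set.Ioo (0:ℝ) 1 := ⟨sigmoid_pos _, sigmoid_lt_one _⟩
  have h1 := tendsto_g h2 hc2 hcneg hcx hfix hxc0 hxc1 hmem1
  have h2' := tendsto_g h2 hc2 hcneg hcx hfix hxc0 hxc1 hmem2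
  rw [Metric.tendsto_atTop] at h1 h2'
  obtain ⟨K1, hK1⟩ := h1 ε hε
  obtain ⟨K2, hK2⟩ := h2' ε hε
  refine ⟨2*K1 + 2*K2 + 3, ?_⟩
  intro t' ht'
  rcases Nat.even_or_odd t' with ⟨k, hk⟩ | ⟨k, hk⟩
  · -- t' = k + k, k ≥ 2
    have hkk : t' = 2*(k-1) + 2 := by omega
    have heq : (mc c)^[t'] x = (fun w => mc c (mc c w))^[k-1] (mc c (mc c x)) := by
      rw [g_iterate_eq, hkk, Function.iterate_add_apply]
      simp [Function.iterate_succ, Function.comp]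
    rw [heq]
    have := hK2 (k-1) (by omega)
    rwa [Real.dist_eq] at this
  · have hkk : t' = 2*k + 1 := by omega
    have heq : (mc c)^[t'] x = (fun w => mc c (mc c w))^[k] (mc c x) := by
      rw [g_iterate_eq, hkk, Function.iterate_add_apply]
      simp
    rw [heq]
    have := hK1 k (by omega)
    rwa [Real.dist_eq] at this


lemma hasDerivAt_sder (u : ℝ) :
    HasDerivAt sder (Real.exp u * (1 - Real.exp u)/(1+Real.exp u)^3) u := by
  have h0 : HasDerivAt (fun u : ℝ => 1 + Real.exp u) (Real.exp u) u := by
    simpa [Pi.add_def] using (hasDerivAt_const u (1:ℝ)).add (Real.hasDerivAt_exp u)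
  have hq : HasDerivAt (fun u : ℝ => (1+Real.exp u)^2)
      (2*(1+Real.exp u)^1*Real.exp u) u := h0.pow 2
  have h := (Real.hasDerivAt_exp u).div hq (by positivity)
  refine h.congr_deriv ?_
  have h1 : (0:ℝ) < 1 + Real.exp u := aux_pos u
  field_simp
  ring

lemma sder_deriv_bound (u : ℝ) :
    |Real.exp u * (1 - Real.exp u)/(1+Real.exp u)^3| ≤ 1/4 := by
  have hw : (0:ℝ) < Real.exp u := Real.exp_pos u
  set w := Real.exp u
  rw [abs_div, abs_of_pos (by positivity : (0:ℝ) < (1+w)^3), div_le_iff₀ (by positivity), abs_mul,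
    abs_of_pos hw]
  rcases abs_cases (1 - w) with ⟨h,_⟩ | ⟨h,_⟩ <;> rw [h] <;>
    nlinarith [sq_nonneg (1-2*w), sq_nonneg w, sq_nonneg (1-w), mul_pos hw hw]

lemma lipschitz_of_deriv_bound {f f' : ℝ → ℝ} {C : ℝ} (hf : ∀ x, HasDerivAt f (f' x) x)
    (hb : ∀ x, |f' x| ≤ C) (a b : ℝ) : |f a - f b| ≤ C * |a - b| := by
  have hcont : Continuous f := by
    rw [continuous_iff_continuousAt]; exact fun x => (hf x).continuousAt
  have main : ∀ p q : ℝ, p < q → |f p - f q| ≤ C * |p - q| := by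
    intro p q hpq
    obtain ⟨ξ, _, hξ⟩ := exists_hasDerivAt_eq_slope f f' hpq hcont.continuousOn
      (fun x _ => hf x)
    have hne : q - p ≠ 0 := by intro hcon; linarith [sub_eq_zero.mp hcon]
    have : f q - f p = f' ξ * (q - p) := by
      rw [hξ]; field_simp
    rw [abs_sub_comm p q, abs_sub_comm (f p) (f q), this, abs_mul]
    exact mul_le_mul_of_nonneg_right (hb ξ) (abs_nonneg _)
  rcases lt_trichotomy a b with h | h | h
  · exact main a b h
  · simp [h]
  · rw [abs_sub_comm (f a) (f b), abs_sub_comm a b]; exact main b a h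

lemma mderiv_lip (c a b : ℝ) :
    |c * sder (c*a) - c * sder (c*b)| ≤ (c^2/4) * |a - b| := by
  have h := lipschitz_of_deriv_bound hasDerivAt_sder sder_deriv_bound (c*a) (c*b)
  calc |c * sder (c*a) - c * sder (c*b)| = |c| * |sder (c*a) - sder (c*b)| := by
        rw [← abs_mul]; ring_nf
    _ ≤ |c| * (1/4 * |c*a - c*b|) := mul_le_mul_of_nonneg_left h (abs_nonneg c)
    _ = (c^2/4) * |a - b| := by
        rw [show c*a - c*b = c*(a-b) from by ring, abs_mul,
          show (c:ℝ)^2 = |c| * |c| from by rw [abs_mul_abs_self]; ring]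
        ring

lemma mderiv_xc (h2 : xs * Real.exp xs = 1 + Real.exp xs)
    (hc2 : c = -xs * (1 + Real.exp xs)) (hcx : c * xc = -xs) :
    c * sder (c * xc) = -1 := by
  rw [hcx]
  unfold sder
  rw [Real.exp_neg, hc2]
  have hE : (0:ℝ) < Real.exp xs := Real.exp_pos xs
  have hE1 : (0:ℝ) < 1 + (Real.exp xs)⁻¹ := by positivity
  field_simp
  ring_nf
  nlinarith [h2, sq_nonneg (Real.exp xs)]

lemma step_lower (h2 : xs * Real.exp xs = 1 + Real.exp xs)
    (hc2 : c = -xs * (1 + Real.exp xs)) (hcx : c * xc = -xs)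
    (hfix : _root_.sigmoid (c * xc) = xc) (z : ℝ) :
    |z - xc| - (c^2/4) * |z - xc|^2 ≤ |mc c z - xc| := by
  have hM : (0:ℝ) ≤ c^2/4 := by positivity
  have hfixm : mc c xc = xc := hfix
  have key : ∀ ξ : ℝ, |ξ - xc| ≤ |z - xc| →
      (1 - (c^2/4)*|ξ - xc|) * |z - xc| ≥ |z - xc| - (c^2/4) * |z - xc|^2 := by
    intro ξ hξ
    nlinarith [mul_le_mul_of_nonneg_right hξ (abs_nonneg (z - xc)), hM, abs_nonneg (z - xc)]
  have lb : ∀ ξ : ℝ, 1 - (c^2/4)*|ξ - xc| ≤ |c * sder (c*ξ)| := by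
    intro ξ
    have hlip := mderiv_lip c ξ xc
    rw [mderiv_xc h2 hc2 hcx] at hlip
    have habs := abs_sub_abs_le_abs_sub (-1 : ℝ) (c * sder (c*ξ))
    rw [abs_neg, abs_one, abs_sub_comm] at habs
    linarith
  rcases lt_trichotomy z xc with hlt | heq | hgt
  · obtain ⟨ξ, hmem, hξ⟩ := exists_hasDerivAt_eq_slope (mc c) (fun x => c * sder (c*x)) hlt
      (continuous_mc c).continuousOn (fun x _ => hasDerivAt_mc c x)
    have hzx : (0:ℝ) < xc - z := by linarith
    have heq2 : mc c xc - mc c z = (c * sder (c*ξ)) * (xc - z) := by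
      rw [hξ]; field_simp
    rw [hfixm] at heq2
    have habs2 : |mc c z - xc| = |c * sder (c*ξ)| * |z - xc| := by
      rw [abs_sub_comm z xc, abs_of_pos hzx, abs_sub_comm (mc c z) xc,
        show xc - mc c z = (c * sder (c*ξ)) * (xc - z) from heq2, abs_mul,
        abs_of_pos hzx]
    have hξb : |ξ - xc| ≤ |z - xc| := by
      rw [abs_sub_comm z xc, abs_of_pos hzx, abs_sub_comm ξ xc,
        abs_of_pos (by linarith [hmem.2] : (0:ℝ) < xc - ξ)]
      linarith [hmem.1]
    have := mul_le_mul_of_nonneg_right (lb ξ) (abs_nonneg (z - xc))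
    rw [← habs2] at this
    linarith [key ξ hξb]
  · rw [heq]
    simp [hfixm]
  · obtain ⟨ξ, hmem, hξ⟩ := exists_hasDerivAt_eq_slope (mc c) (fun x => c * sder (c*x)) hgt
      (continuous_mc c).continuousOn (fun x _ => hasDerivAt_mc c x)
    have hzx : (0:ℝ) < z - xc := by linarith
    have heq2 : mc c z - mc c xc = (c * sder (c*ξ)) * (z - xc) := by
      rw [hξ]; field_simp
    rw [hfixm] at heq2
    have habs2 : |mc c z - xc| = |c * sder (c*ξ)| * |z - xc| := by
      rw [show mc c z - xc = (c * sder (c*ξ)) * (z - xc) from heq2, abs_mul]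
    have hξb : |ξ - xc| ≤ |z - xc| := by
      rw [abs_of_pos hzx, abs_of_pos (by linarith [hmem.1] : (0:ℝ) < ξ - xc)]
      linarith [hmem.2]
    have := mul_le_mul_of_nonneg_right (lb ξ) (abs_nonneg (z - xc))
    rw [← habs2] at this
    linarith [key ξ hξb]


lemma far_lower (hcneg : c < 0) (hfix : _root_.sigmoid (c * xc) = xc) {r : ℝ} (hr : 0 < r)
    (z : ℝ) (hz : r ≤ |z - xc|) :
    min (xc - mc c (xc + r)) (mc c (xc - r) - xc) ≤ |mc c z - xc| := by
  have hanti := mc_strictAnti hcneg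
  have hfixm : mc c xc = xc := hfix
  rcases le_abs'.mp hz with hle | hge
  · -- z - xc ≤ -r, i.e. z ≤ xc - r
    have hz' : z ≤ xc - r := by linarith
    have h1 : mc c (xc - r) ≤ mc c z := by
      rcases eq_or_lt_of_le hz' with h | h
      · rw [h]
      · exact (hanti h).le
    have h2 : xc < mc c (xc - r) := by
      have := hanti (show xc - r < xc by linarith)
      rwa [hfixm] at this
    rw [abs_of_pos (by linarith : (0:ℝ) < mc c z - xc)]
    calc min (xc - mc c (xc + r)) (mc c (xc - r) - xc) ≤ mc c (xc - r) - xc := min_le_right _ _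
      _ ≤ mc c z - xc := by linarith
  · -- r ≤ z - xc
    have hz' : xc + r ≤ z := by linarith
    have h1 : mc c z ≤ mc c (xc + r) := by
      rcases eq_or_lt_of_le hz' with h | h
      · rw [← h]
      · exact (hanti h).le
    have h2 : mc c (xc + r) < xc := by
      have := hanti (show xc < xc + r by linarith)
      rwa [hfixm] at this
    rw [abs_of_neg (by linarith : mc c z - xc < 0)]
    calc min (xc - mc c (xc + r)) (mc c (xc - r) - xc) ≤ xc - mc c (xc + r) := min_le_left _ _
      _ ≤ -(mc c z - xc) := by linarith

lemma inv_step (h2 : xs * Real.exp xs = 1 + Real.exp xs)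
    (hc2 : c = -xs * (1 + Real.exp xs)) (hcx : c * xc = -xs)
    (hfix : _root_.sigmoid (c * xc) = xc) (hcne : c ≠ 0) (z : ℝ)
    (hz0 : 0 < |z - xc|) (hzr : |z - xc| < 1/(2*(c^2/4))) :
    0 < |mc c z - xc| ∧ 1/|mc c z - xc| ≤ 1/|z - xc| + 2*(c^2/4) := by
  set M : ℝ := c^2/4 with hM
  have hMpos : 0 < M := by
    rw [hM]; positivity
  set d : ℝ := |z - xc| with hd
  have hMd : M * d < 1/2 := by
    rw [lt_div_iff₀ (by positivity : (0:ℝ) < 2*M)] at hzr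
    nlinarith
  have hstep := step_lower h2 hc2 hcx hfix z
  have hd' : d * (1 - M*d) ≤ |mc c z - xc| := by
    have : d - M * d^2 = d * (1 - M*d) := by ring
    rw [← this]
    exact hstep
  have hpos2 : 0 < d * (1 - M*d) := by
    apply mul_pos hz0
    nlinarith
  constructor
  · linarith
  · have h1 : 1/|mc c z - xc| ≤ 1/(d * (1 - M*d)) :=
      one_div_le_one_div_of_le hpos2 hd'
    have h2' : 1/(d * (1 - M*d)) ≤ 1/d + 2*M := by
      have hdne : d ≠ 0 := ne_of_gt hz0
      have hexp : (1/d + 2*M)*(d*(1-M*d)) = (1 - M*d) + 2*M*d*(1-M*d) := by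
        field_simp
      rw [div_le_iff₀ hpos2, hexp]
      nlinarith [mul_pos hMpos hz0, hMd]
    linarith

lemma iter_ne (hcneg : c < 0) (hfix : _root_.sigmoid (c * xc) = xc) {x : ℝ} (hx : x ≠ xc) :
    ∀ i, (mc c)^[i] x ≠ xc := by
  have hinj : Function.Injective (mc c) := (mc_strictAnti hcneg).injective
  intro i
  induction i with
  | zero => simpa using hx
  | succ n ih =>
    rw [Function.iterate_succ_apply']
    intro hcon
    exact ih (hinj (by rw [hcon, show mc c xc = xc from hfix]))

lemma chain (h2 : xs * Real.exp xs = 1 + Real.exp xs)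
    (hc2 : c = -xs * (1 + Real.exp xs)) (hcx : c * xc = -xs)
    (hfix : _root_.sigmoid (c * xc) = xc) (hcne : c ≠ 0) (hcneg : c < 0)
    {x : ℝ} (hx : x ≠ xc) :
    ∀ n k : ℕ, (∀ i : ℕ, k ≤ i → i < k + n → |(mc c)^[i] x - xc| < 1/(2*(c^2/4))) →
      1/|(mc c)^[k+n] x - xc| ≤ 1/|(mc c)^[k] x - xc| + 2*(c^2/4)*n := by
  intro n
  induction n with
  | zero => intro k _; simp
  | succ n ih =>
    intro k hk
    have h1 := ih k (fun i hi1 hi2 => hk i hi1 (by omega))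
    have hpos : 0 < |(mc c)^[k+n] x - xc| :=
      abs_pos.mpr (sub_ne_zero.mpr (iter_ne hcneg hfix hx (k+n)))
    have h2' := inv_step h2 hc2 hcx hfix hcne ((mc c)^[k+n] x) hpos
      (hk (k+n) (by omega) (by omega))
    rw [show k+(n+1) = (k+n)+1 by omega, Function.iterate_succ_apply']
    push_cast
    have := h2'.2
    nlinarith [sq_nonneg c]


end Crit
end DynCrit

/-- If c = c⋆: (a) τ̂(ε,x,c) is finite for every x and ε > 0;
(b) for x ≠ x_c^*, ε·τ̂(ε,x,c) is bounded away from 0 as ε → 0. -/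
theorem dyn_critical_convergence (xs c xc : ℝ)
    (hxs : 0 < xs ∧ xs * Real.exp xs / (1 + Real.exp xs) = 1)
    (hc : c = -1 - xs - Real.exp xs)
    (hxc : xc ∈ Set.Icc (0:ℝ) 1 ∧ mc c xc = xc) :
    (∀ x ∈ Set.Icc (0:ℝ) 1, ∀ ε : ℝ, 0 < ε →
        ∃ t : ℕ, ∀ t' : ℕ, t ≤ t' → |(mc c)^[t'] x - xc| < ε) ∧
    (∀ x ∈ Set.Icc (0:ℝ) 1, x ≠ xc →
        ∃ δ > (0:ℝ), ∃ ε₀ > (0:ℝ), ∀ ε : ℝ, 0 < ε → ε < ε₀ →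
          ∀ t : ℕ, (∀ t' : ℕ, t ≤ t' → |(mc c)^[t'] x - xc| < ε) →
            δ ≤ ε * t) := by
  obtain ⟨h1, h2'⟩ := hxs
  obtain ⟨hxcm, hfixm⟩ := hxc
  have h2 : xs * Real.exp xs = 1 + Real.exp xs := by
    rw [div_eq_one_iff_eq (ne_of_gt (DynCrit.aux_pos xs))] at h2'
    exact h2'
  have hc2 : c = -xs * (1 + Real.exp xs) := DynCrit.hc2_of h2 hc
  have hcneg : c < 0 := DynCrit.hcneg_of h1 hc2
  have hcne : c ≠ 0 := ne_of_lt hcneg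
  have hfix : _root_.sigmoid (c * xc) = xc := hfixm
  have hcx : c * xc = -xs := DynCrit.cxc_eq hcneg hc2 hfix
  obtain ⟨hxc0, hxc1⟩ := DynCrit.xc_mem hcx hfix
  constructor
  · intro x _ ε hε
    exact DynCrit.part_a h2 hc2 hcneg hcx hfix hxc0 hxc1 x hε
  · intro x _ hxne
    classical
    set M : ℝ := c^2/4 with hM
    have hMpos : 0 < M := by rw [hM]; positivity
    set r : ℝ := 1/(2*M) with hr
    have hrpos : 0 < r := by rw [hr]; positivity
    set κ : ℝ := min (xc - mc c (xc + r)) (mc c (xc - r) - xc) with hκ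
    have hκpos : 0 < κ := by
      apply lt_min
      · have := DynCrit.mc_strictAnti hcneg (show xc < xc + r by linarith)
        rw [show mc c xc = xc from hfix] at this
        linarith
      · have := DynCrit.mc_strictAnti hcneg (show xc - r < xc by linarith)
        rw [show mc c xc = xc from hfix] at this
        linarith
    have hd0pos : 0 < |x - xc| := abs_pos.mpr (sub_ne_zero.mpr hxne)
    set A : ℝ := max (1/|x - xc|) (1/κ) with hA
    have hApos : 0 < A := lt_max_iff.mpr (Or.inl (by positivity))
    refine ⟨1/(4*M), by positivity, min (min (|x - xc|) r) (1/(2*A)), by positivity, ?_⟩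
    intro ε hε hεlt t ht
    have hε1 : ε < |x - xc| :=
      lt_of_lt_of_le hεlt (le_trans (min_le_left _ _) (min_le_left _ _))
    have hε2 : ε < r :=
      lt_of_lt_of_le hεlt (le_trans (min_le_left _ _) (min_le_right _ _))
    have hε3 : ε < 1/(2*A) := lt_of_lt_of_le hεlt (min_le_right _ _)
    have hdt : |(mc c)^[t] x - xc| < ε := ht t le_rfl
    have hdtpos : 0 < |(mc c)^[t] x - xc| :=
      abs_pos.mpr (sub_ne_zero.mpr (DynCrit.iter_ne hcneg hfix hxne t))
    have hinv : 1/ε < 1/|(mc c)^[t] x - xc| := one_div_lt_one_div_of_lt hdtpos hdt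
    have hmain : 1/|(mc c)^[t] x - xc| ≤ A + 2*M*t := by
      by_cases hcase : ∃ i, i ≤ t ∧ r ≤ |(mc c)^[i] x - xc|
      · obtain ⟨i0, hi0le, hi0⟩ := hcase
        set P : ℕ → Prop := fun i => r ≤ |(mc c)^[i] x - xc| with hP
        set u : ℕ := Nat.findGreatest P t with hu
        have hPu : P u := Nat.findGreatest_spec hi0le hi0
        have hule : u ≤ t := Nat.findGreatest_le t
        have hnPt : ¬ P t := by
          rw [hP]
          simp only [not_le]
          exact lt_trans hdt hε2
        have hut : u < t := lt_of_le_of_ne hule (fun h => hnPt (h ▸ hPu))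
        have hκle : κ ≤ |(mc c)^[u+1] x - xc| := by
          have h7 := DynCrit.far_lower hcneg hfix hrpos ((mc c)^[u] x) hPu
          rw [Function.iterate_succ_apply']
          exact h7
        have hcond : ∀ i : ℕ, u+1 ≤ i → i < (u+1) + (t - (u+1)) →
            |(mc c)^[i] x - xc| < 1/(2*(c^2/4)) := by
          intro i hi1 hi2
          have hnp : ¬ P i := by
            have hgt : u < i := by omega
            have hile : i ≤ t := by omega
            rw [hu] at hgt
            exact Nat.findGreatest_is_greatest hgt hile
          rw [hP] at hnp
          simp only [not_le] at hnp
          rw [show (1:ℝ)/(2*(c^2/4)) = r from by rw [hr, hM]]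
          exact hnp
        have hchain := DynCrit.chain h2 hc2 hcx hfix hcne hcneg hxne
          (t - (u+1)) (u+1) hcond
        rw [show (u+1) + (t - (u+1)) = t by omega] at hchain
        have hb1 : 1/|(mc c)^[u+1] x - xc| ≤ 1/κ :=
          one_div_le_one_div_of_le hκpos hκle
        have hb2 : (1:ℝ)/κ ≤ A := le_max_right _ _
        have hb3 : ((t - (u+1) : ℕ) : ℝ) ≤ (t : ℝ) := Nat.cast_le.mpr (by omega)
        have hb4 : 2*(c^2/4) * ((t - (u+1) : ℕ) : ℝ) ≤ 2*M*(t:ℝ) := by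
          rw [hM]
          apply mul_le_mul_of_nonneg_left hb3 (by positivity)
        linarith
      · push_neg at hcase
        have hcond : ∀ i : ℕ, 0 ≤ i → i < 0 + t →
            |(mc c)^[i] x - xc| < 1/(2*(c^2/4)) := by
          intro i _ hi2
          rw [show (1:ℝ)/(2*(c^2/4)) = r from by rw [hr, hM]]
          exact hcase i (by omega)
        have hchain := DynCrit.chain h2 hc2 hcx hfix hcne hcneg hxne t 0 hcond
        rw [show (0:ℕ) + t = t by omega] at hchain
        simp only [Function.iterate_zero_apply] at hchain
        have hb2 : 1/|x - xc| ≤ A := le_max_left _ _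
        have : 2*(c^2/4)*(t:ℝ) = 2*M*(t:ℝ) := by rw [hM]
        linarith
    have hSε : 1 < (A + 2*M*t) * ε := by
      rw [← div_lt_iff₀ hε]
      exact lt_of_lt_of_le hinv hmain
    have hεA : ε*A < 1/2 := by
      have h5 := mul_lt_mul_of_pos_right hε3 hApos
      have h6 : 1/(2*A)*A = 1/2 := by
        field_simp
      rw [h6] at h5
      exact h5
    rw [div_le_iff₀ (by positivity : (0:ℝ) < 4*M)]
    nlinarith [hSε, hεA, hMpos]
end
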